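/- arXiv:2007.12602 — 9 statements merged into one kernel-verified Lean document; each statement's English description precedes it below -/
import Mathlib

section
/- The Eulerian polynomial E_n(x) satisfies the Frobenius formula: E_n(x) = Σ_{i=1}^n i!·S(n,i)·x^i·(1-x)^(n-i) for all n ≥ 1. -/
open Polynomial

/-- Stirling numbers of the second kind. -/
def stirling2 : ℕ → ℕ → ℕ
  | 0, 0 => 1
  | 0, _ + 1 => 0
  | _ + 1, 0 => 0
  | n + 1, k + 1 => (k + 1) * stirling2 n (k + 1) + stirling2 n k

open Classical in
/-- The number of descents of a permutation of `{0, 1, ..., n-1}`: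
positions `i` with `i + 1 < n` and `π(i) > π(i+1)`. -/
noncomputable def descNum {n : ℕ} (π : Equiv.Perm (Fin n)) : ℕ :=
  ((Finset.range (n - 1)).filter fun i =>
    ∃ h : i + 1 < n, π ⟨i + 1, h⟩ < π ⟨i, Nat.lt_of_succ_lt h⟩).card

/-!
Expanding `X ^ (1 + d) = X ^ (1 + d) * ((1 - X) + X) ^ (n - 1 - d)` by the binomial theorem
reduces the formula to `∑ π, (n - 1 - des π).choose (n - i) = i! * S(n, i)`. The left side
counts permutations `π` together with a set `S` of `i - 1` bars placed in the `n - 1` gaps of the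
word `π 0 … π (n - 1)`, at least one in every descent. Sending the letter `π q` to the number of
bars before position `q` gives a surjection `Fin n → Fin i`, and every surjection `f` arises
exactly once: `π` must be `Tuple.sort f`, and the bars sit where `f ∘ π` increases. Splitting a
surjection by its value at `0` shows that the surjections `Fin n → Fin i` satisfy the recurrence
of `i! * S(n, i)`.
-/

open Finset
open scoped Nat

theorem Nat.exists_count_eq {p : ℕ → Prop} [DecidablePred p] {m j : ℕ}
    (hj : j ≤ Nat.count p m) : ∃ q ≤ m, Nat.count p q = j := by
  induction m with
  | zero => exact ⟨0, le_rfl, by simpa using (hj.antisymm (zero_le _)).symm⟩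
  | succ m ih =>
    rcases hj.lt_or_eq with hlt | rfl
    · have : j ≤ Nat.count p m := by rw [Nat.count_succ] at hlt; split_ifs at hlt <;> omega
      obtain ⟨q, hqm, hq⟩ := ih this
      exact ⟨q, hqm.trans m.le_succ, hq⟩
    · exact ⟨m + 1, le_rfl, rfl⟩

theorem Nat.count_mem_le_card (S : Finset ℕ) (q : ℕ) : Nat.count (· ∈ S) q ≤ #S := by
  rw [Nat.count_eq_card_filter_range]
  exact card_le_card fun x hx => (mem_filter.1 hx).2

theorem Nat.count_mem_eq_card {S : Finset ℕ} {q : ℕ} (h : S ⊆ range q) :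
    Nat.count (· ∈ S) q = #S := by
  rw [Nat.count_eq_card_filter_range, filter_mem_eq_inter, inter_eq_right.2 h]

theorem Fin.strictMono_of_lt_add_one {α : Type*} [Preorder α] {n : ℕ} {u : Fin n → α}
    (h : ∀ q (hq : q + 1 < n), u ⟨q, by omega⟩ < u ⟨q + 1, hq⟩) : StrictMono u := by
  cases n with
  | zero => exact fun a => a.elim0
  | succ m => exact Fin.strictMono_iff_lt_succ.2 fun q => h q q.succ.isLt

theorem Tuple.eq_sort_of_lt_add_one {α : Type*} [LinearOrder α] {n : ℕ} {f : Fin n → α}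
    {σ : Equiv.Perm (Fin n)}
    (h : ∀ q (hq : q + 1 < n), f (σ ⟨q, by omega⟩) < f (σ ⟨q + 1, hq⟩) ∨
      f (σ ⟨q, by omega⟩) = f (σ ⟨q + 1, hq⟩) ∧ σ ⟨q, by omega⟩ < σ ⟨q + 1, hq⟩) :
    σ = Tuple.sort f :=
  Tuple.eq_sort_iff'.2 <| Fin.strictMono_of_lt_add_one fun q hq => by
    show (⟨_, _⟩ : Tuple.graph f) < ⟨_, _⟩
    exact Subtype.mk_lt_mk.2 (Prod.Lex.toLex_lt_toLex.2 (h q hq))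

namespace Fin

variable {n i : ℕ} {g : Fin n → Fin i}

def ascents (g : Fin n → Fin i) : Finset ℕ :=
  (range (n - 1)).filter fun q => ∃ h : q + 1 < n, g ⟨q, by omega⟩ < g ⟨q + 1, h⟩

theorem mem_ascents {q : ℕ} :
    q ∈ ascents g ↔ ∃ h : q + 1 < n, g ⟨q, by omega⟩ < g ⟨q + 1, h⟩ := by
  simp only [ascents, mem_filter, mem_range]
  exact ⟨fun h => h.2, fun h => ⟨by obtain ⟨h, -⟩ := h; omega, h⟩⟩

theorem ascents_subset_range (g : Fin n → Fin i) : ascents g ⊆ range (n - 1) :=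
  filter_subset _ _

theorem val_apply_zero_of_monotone_of_surjective (hg : Monotone g)
    (hs : Function.Surjective g) (hn : 0 < n) : (g ⟨0, hn⟩ : ℕ) = 0 := by
  obtain ⟨x, hx⟩ := hs ⟨0, (g ⟨0, hn⟩).pos⟩
  have := Fin.le_def.1 (hg (show (⟨0, hn⟩ : Fin n) ≤ x from Nat.zero_le _))
  rw [hx] at this
  exact Nat.le_zero.1 this

theorem val_apply_last_of_monotone_of_surjective (hg : Monotone g)
    (hs : Function.Surjective g) (hn : 0 < n) : (g ⟨n - 1, by omega⟩ : ℕ) = i - 1 := by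
  obtain ⟨x, hx⟩ := hs ⟨i - 1, by have := (g ⟨0, hn⟩).pos; omega⟩
  have := Fin.le_def.1 (hg (show x ≤ ⟨n - 1, by omega⟩ from Nat.le_sub_one_of_lt x.isLt))
  rw [hx, Fin.val_mk] at this
  have := (g ⟨n - 1, by omega⟩).isLt
  omega

theorem val_apply_succ_le_of_monotone_of_surjective (hg : Monotone g)
    (hs : Function.Surjective g) (q : ℕ) (hq : q + 1 < n) :
    (g ⟨q + 1, hq⟩ : ℕ) ≤ g ⟨q, by omega⟩ + 1 := by
  by_contra! hlt
  obtain ⟨x, hx⟩ := hs ⟨g ⟨q, by omega⟩ + 1, by omega⟩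
  have hgx : (g x : ℕ) = g ⟨q, by omega⟩ + 1 := by rw [hx]
  rcases le_or_gt (x : ℕ) q with hxq | hxq
  · have := Fin.le_def.1 (hg (show x ≤ ⟨q, by omega⟩ from hxq))
    omega
  · have := Fin.le_def.1 (hg (show (⟨q + 1, hq⟩ : Fin n) ≤ x from hxq))
    omega

theorem count_ascents (hg : Monotone g) (hs : Function.Surjective g) (q : ℕ) (hq : q < n) :
    Nat.count (· ∈ ascents g) q = g ⟨q, hq⟩ := by
  induction q with
  | zero => rw [Nat.count_zero, val_apply_zero_of_monotone_of_surjective hg hs]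
  | succ q ih =>
    have hle := Fin.le_def.1 (hg (show (⟨q, by omega⟩ : Fin n) ≤ ⟨q + 1, hq⟩ from q.le_succ))
    have hstep := val_apply_succ_le_of_monotone_of_surjective hg hs q hq
    rw [Nat.count_succ, ih (by omega)]
    by_cases hasc : q ∈ ascents g
    · have hlt := Fin.lt_def.1 (mem_ascents.1 hasc).2
      rw [if_pos hasc]
      omega
    · have : ¬ (g ⟨q, by omega⟩ : ℕ) < g ⟨q + 1, hq⟩ := fun hlt =>
        hasc (mem_ascents.2 ⟨hq, Fin.lt_def.2 hlt⟩)
      rw [if_neg hasc]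
      omega

theorem card_ascents (hg : Monotone g) (hs : Function.Surjective g) (hn : 0 < n) :
    #(ascents g) = i - 1 := by
  rw [← Nat.count_mem_eq_card (ascents_subset_range g), count_ascents hg hs (n - 1) (by omega),
    val_apply_last_of_monotone_of_surjective hg hs hn]

end Fin

namespace Equiv.Perm

variable {n i : ℕ} (π : Perm (Fin n))

open Classical in
noncomputable def descents : Finset ℕ :=
  (range (n - 1)).filter fun q => ∃ h : q + 1 < n, π ⟨q + 1, h⟩ < π ⟨q, by omega⟩

theorem descNum_eq_card_descents : descNum π = #π.descents := rfl

theorem descents_subset_range : π.descents ⊆ range (n - 1) := filter_subset _ _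

variable {π} in
theorem mem_descents {q : ℕ} :
    q ∈ π.descents ↔ ∃ h : q + 1 < n, π ⟨q + 1, h⟩ < π ⟨q, by omega⟩ := by
  simp only [descents, mem_filter, mem_range]
  exact ⟨fun h => h.2, fun h => ⟨by obtain ⟨h, -⟩ := h; omega, h⟩⟩

/-- `q ∈ S` puts a bar between positions `q` and `q + 1`. -/
noncomputable def compatibleBars (i : ℕ) : Finset (Finset ℕ) :=
  ((range (n - 1)).powersetCard (i - 1)).filter (π.descents ⊆ ·)

variable {π} in
theorem mem_compatibleBars {S : Finset ℕ} :
    S ∈ π.compatibleBars i ↔ S ⊆ range (n - 1) ∧ #S = i - 1 ∧ π.descents ⊆ S := by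
  simp [compatibleBars, and_assoc]

theorem card_compatibleBars (hi : 1 ≤ i) (hin : i ≤ n) :
    #(π.compatibleBars i) = (n - 1 - descNum π).choose (n - i) := by
  have hcard : n - 1 - descNum π = #(range (n - 1) \ π.descents) := by
    rw [card_sdiff_of_subset π.descents_subset_range, card_range, descNum_eq_card_descents]
  rw [hcard, ← card_powersetCard]
  refine card_nbij' (range (n - 1) \ ·) (range (n - 1) \ ·) ?_ ?_ ?_ ?_
  · intro S hS
    obtain ⟨hSr, hSc, hdS⟩ := mem_compatibleBars.1 hS
    rw [mem_coe, mem_powersetCard, card_sdiff_of_subset hSr, card_range, hSc]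
    exact ⟨sdiff_subset_sdiff subset_rfl hdS, by omega⟩
  · intro T hT
    rw [mem_coe, mem_powersetCard] at hT
    have hTr : T ⊆ range (n - 1) := hT.1.trans sdiff_subset
    refine mem_compatibleBars.2 ⟨sdiff_subset, ?_, ?_⟩
    · rw [card_sdiff_of_subset hTr, card_range, hT.2]
      omega
    · exact subset_sdiff.2 ⟨π.descents_subset_range, disjoint_sdiff.mono_right hT.1⟩
  · intro S hS
    exact Finset.sdiff_sdiff_eq_self (mem_compatibleBars.1 hS).1
  · intro T hT
    exact Finset.sdiff_sdiff_eq_self ((mem_powersetCard.1 hT).1.trans sdiff_subset)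

theorem card_lt_of_mem_compatibleBars (hi : 1 ≤ i) {S : Finset ℕ}
    (hS : S ∈ π.compatibleBars i) : #S < i := by
  rw [(mem_compatibleBars.1 hS).2.1]
  omega

def blockIndex (S : Finset ℕ) (hS : #S < i) : Fin n → Fin i :=
  fun x => ⟨Nat.count (· ∈ S) (π.symm x), (Nat.count_mem_le_card S _).trans_lt hS⟩

theorem blockIndex_apply_self (S : Finset ℕ) (hS : #S < i) (q : Fin n) :
    (π.blockIndex S hS (π q) : ℕ) = Nat.count (· ∈ S) q := by
  simp [blockIndex]

variable {π}

theorem sort_blockIndex {S : Finset ℕ} (hS : #S < i) (hdS : π.descents ⊆ S) :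
    Tuple.sort (π.blockIndex S hS) = π := by
  refine (Tuple.eq_sort_of_lt_add_one fun q hq => ?_).symm
  simp only [Fin.lt_def, Fin.ext_iff, blockIndex_apply_self]
  by_cases hqS : q ∈ S
  · exact Or.inl (Nat.count_lt_count_succ_iff.2 hqS)
  · refine Or.inr ⟨(Nat.count_succ_eq_count_iff.2 hqS).symm, ?_⟩
    have hasc : ¬ π ⟨q + 1, hq⟩ < π ⟨q, by omega⟩ := fun h =>
      hqS (hdS (mem_descents.2 ⟨hq, h⟩))
    refine (not_lt.1 hasc).lt_of_ne fun h => ?_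
    simpa using π.injective h

theorem surjective_blockIndex {S : Finset ℕ} (hS : #S < i) (hSr : S ⊆ range (n - 1))
    (hSc : #S = i - 1) (hn : 0 < n) : Function.Surjective (π.blockIndex S hS) := by
  intro j
  obtain ⟨q, hq, hqj⟩ := Nat.exists_count_eq (p := (· ∈ S)) (m := n - 1) (j := j)
    (by rw [Nat.count_mem_eq_card hSr]; omega)
  exact ⟨π ⟨q, by omega⟩, Fin.ext (by rw [blockIndex_apply_self]; exact hqj)⟩

theorem ascents_blockIndex_comp {S : Finset ℕ} (hS : #S < i) (hSr : S ⊆ range (n - 1)) :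
    Fin.ascents (π.blockIndex S hS ∘ π) = S := by
  ext q
  simp only [Fin.mem_ascents, Function.comp, Fin.lt_def, blockIndex_apply_self,
    Nat.count_lt_count_succ_iff]
  exact ⟨fun ⟨_, h⟩ => h, fun h => ⟨by have := mem_range.1 (hSr h); omega, h⟩⟩

theorem descents_sort_subset_ascents (f : Fin n → Fin i) :
    (Tuple.sort f).descents ⊆ Fin.ascents (f ∘ Tuple.sort f) := by
  intro q hq
  obtain ⟨h, hdesc⟩ := mem_descents.1 hq
  obtain ⟨hmono, hstab⟩ := Tuple.eq_sort_iff.1 (rfl : Tuple.sort f = Tuple.sort f)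
  refine Fin.mem_ascents.2 ⟨h, (hmono (Fin.mk_le_mk.2 q.le_succ)).lt_of_ne fun heq => ?_⟩
  exact (hstab _ _ (Fin.mk_lt_mk.2 q.lt_succ_self) heq).asymm hdesc

theorem blockIndex_sort_ascents {f : Fin n → Fin i} (hf : Function.Surjective f)
    (hS : #(Fin.ascents (f ∘ Tuple.sort f)) < i) :
    (Tuple.sort f).blockIndex (Fin.ascents (f ∘ Tuple.sort f)) hS = f := by
  funext x
  obtain ⟨q, rfl⟩ := (Tuple.sort f).surjective x
  refine Fin.ext ?_
  rw [blockIndex_apply_self,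
    Fin.count_ascents (Tuple.monotone_sort f) (hf.comp (Tuple.sort f).surjective) q q.isLt]
  rfl

def sigmaCompatibleBarsEquiv (hi : 1 ≤ i) (hin : i ≤ n) :
    (Σ π : Perm (Fin n), π.compatibleBars i) ≃ {f : Fin n → Fin i // Function.Surjective f} where
  toFun p := ⟨p.1.blockIndex p.2 (card_lt_of_mem_compatibleBars _ hi p.2.2),
    surjective_blockIndex _ (mem_compatibleBars.1 p.2.2).1 (mem_compatibleBars.1 p.2.2).2.1
      (by omega)⟩
  invFun f := ⟨Tuple.sort f.1, Fin.ascents (f.1 ∘ Tuple.sort f.1),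
    mem_compatibleBars.2 ⟨Fin.ascents_subset_range _,
      Fin.card_ascents (Tuple.monotone_sort _) (f.2.comp (Equiv.surjective _)) (by omega),
      descents_sort_subset_ascents _⟩⟩
  left_inv p := by
    have hsort := sort_blockIndex (card_lt_of_mem_compatibleBars _ hi p.2.2)
      (mem_compatibleBars.1 p.2.2).2.2
    refine Sigma.subtype_ext hsort ?_
    simp only
    rw [hsort]
    exact ascents_blockIndex_comp _ (mem_compatibleBars.1 p.2.2).1
  right_inv f := Subtype.ext <| blockIndex_sort_ascents f.2 <| by
    rw [Fin.card_ascents (Tuple.monotone_sort _) (f.2.comp (Equiv.surjective _)) (by omega)]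
    omega

end Equiv.Perm

theorem factorial_mul_stirling2_succ (n k : ℕ) :
    k ! * stirling2 (n + 1) k = k * (k ! * stirling2 n k + (k - 1)! * stirling2 n (k - 1)) := by
  cases k with
  | zero => simp [stirling2]
  | succ k =>
    simp only [stirling2, Nat.factorial_succ, add_tsub_cancel_right]
    ring

theorem Fin.surjective_cons_iff {β : Type*} {n : ℕ} {y : β} {g : Fin n → β} :
    Function.Surjective (Fin.cons y g : Fin (n + 1) → β) ↔
      Function.Surjective g ∨ Set.range g = {y}ᶜ := by
  rw [← Set.range_eq_univ, Fin.range_cons, ← Set.range_eq_univ]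
  by_cases hy : y ∈ Set.range g
  · have : Set.range g ≠ {y}ᶜ := fun h => by simp [h] at hy
    simp [Set.insert_eq_of_mem hy, this]
  · have hR : Set.range g ≠ Set.univ := fun h => hy (h ▸ Set.mem_univ y)
    simp only [hR, false_or]
    refine ⟨fun h => ?_, fun h => by rw [h, Set.insert_eq, Set.union_compl_self]⟩
    ext b
    have hb := h.symm ▸ Set.mem_univ b
    rw [Set.mem_insert_iff] at hb
    simp only [Set.mem_compl_iff, Set.mem_singleton_iff]
    exact ⟨fun hbg hby => hy (hby ▸ hbg), fun hby => hb.resolve_left hby⟩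

def Equiv.rangeEqEquivSurjective {α β : Type*} (s : Set β) :
    {g : α → β // Set.range g = s} ≃ {h : α → s // Function.Surjective h} where
  toFun g := ⟨fun a => ⟨g.1 a, g.2.subset (Set.mem_range_self a)⟩, fun b => by
    obtain ⟨a, ha⟩ := g.2.symm.subset b.2
    exact ⟨a, Subtype.ext ha⟩⟩
  invFun h := ⟨fun a => h.1 a, by
    rw [Set.range_comp' Subtype.val h.1, h.2.range_eq, Set.image_univ, Subtype.range_coe]⟩
  left_inv _ := rfl
  right_inv _ := rfl

theorem Fintype.card_surjective_fin (n : ℕ) (β : Type*) [Fintype β] [DecidableEq β] :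
    Fintype.card {f : Fin n → β // Function.Surjective f} =
      (Fintype.card β)! * stirling2 n (Fintype.card β) := by
  induction n generalizing β with
  | zero =>
    rcases isEmpty_or_nonempty β with hβ | hβ
    · simp [stirling2, Function.Surjective]
    · have : IsEmpty {f : Fin 0 → β // Function.Surjective f} :=
        ⟨fun f => (f.2 hβ.some).choose.elim0⟩
      obtain ⟨k, hk⟩ := Nat.exists_eq_succ_of_ne_zero (Fintype.card_ne_zero (α := β))
      simp [hk, stirling2]
  | succ n ih =>
    have e : {f : Fin (n + 1) → β // Function.Surjective f} ≃
        Σ y : β, {g : Fin n → β // Function.Surjective (Fin.cons y g : Fin (n + 1) → β)} :=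
      ((Fin.consEquiv fun _ => β).symm.subtypeEquiv fun f => by simp).trans
        (Equiv.subtypeProdEquivSigmaSubtype fun y g =>
          Function.Surjective (Fin.cons y g : Fin (n + 1) → β))
    have hy (y : β) :
        Fintype.card {g : Fin n → β // Function.Surjective (Fin.cons y g : Fin (n + 1) → β)} =
          (Fintype.card β)! * stirling2 n (Fintype.card β) +
            (Fintype.card β - 1)! * stirling2 n (Fintype.card β - 1) := by
      rw [Fintype.card_congr (Equiv.subtypeEquivRight fun g => Fin.surjective_cons_iff),
        Fintype.card_subtype_or_disjoint, ih,
        Fintype.card_congr (Equiv.rangeEqEquivSurjective _), ih, Fintype.card_compl_set]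
      · simp
      · simp only [Pi.disjoint_iff, Prop.disjoint_iff, not_and]
        intro g hg hrange
        simpa using hrange.subset (hg.range_eq.symm.subset (Set.mem_univ y))
    rw [Fintype.card_congr e, Fintype.card_sigma, Finset.sum_congr rfl fun y _ => hy y, sum_const,
      card_univ, smul_eq_mul, factorial_mul_stirling2_succ]

theorem sum_choose_sub_descNum_eq_factorial_mul_stirling2 {n i : ℕ} (hi : 1 ≤ i) (hin : i ≤ n) :
    ∑ π : Equiv.Perm (Fin n), (n - 1 - descNum π).choose (n - i) = i ! * stirling2 n i :=
  calc ∑ π : Equiv.Perm (Fin n), (n - 1 - descNum π).choose (n - i)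
      = ∑ π : Equiv.Perm (Fin n), Fintype.card (π.compatibleBars i) := by
        simp [Equiv.Perm.card_compatibleBars _ hi hin]
    _ = Fintype.card {f : Fin n → Fin i // Function.Surjective f} := by
        rw [← Fintype.card_sigma, Fintype.card_congr (Equiv.Perm.sigmaCompatibleBarsEquiv hi hin)]
    _ = i ! * stirling2 n i := by rw [Fintype.card_surjective_fin, Fintype.card_fin]

theorem Polynomial.X_pow_eq_sum_choose_mul_X_pow_mul_one_sub_X_pow {R : Type*} [CommRing R]
    {n d : ℕ} (hd : d < n) :
    (X : R[X]) ^ (1 + d) =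
      ∑ i ∈ Icc 1 n, C (((n - 1 - d).choose (n - i) : ℕ) : R) * X ^ i * (1 - X) ^ (n - i) := by
  set m := n - 1 - d
  calc (X : R[X]) ^ (1 + d) = X ^ (1 + d) * ((1 - X) + X) ^ m := by simp
    _ = ∑ k ∈ range (m + 1), C ((m.choose k : ℕ) : R) * X ^ (n - k) * (1 - X) ^ k := by
      rw [add_pow, mul_sum]
      refine sum_congr rfl fun k hk => ?_
      rw [mem_range] at hk
      rw [show n - k = (m - k) + (1 + d) by omega, pow_add, map_natCast]
      ring
    _ = ∑ k ∈ range n, C ((m.choose k : ℕ) : R) * X ^ (n - k) * (1 - X) ^ k := by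
      refine sum_subset (range_subset_range.2 (by omega)) fun k _ hk => ?_
      rw [Nat.choose_eq_zero_of_lt (by simpa using hk)]
      simp
    _ = ∑ i ∈ Icc 1 n, C ((m.choose (n - i) : ℕ) : R) * X ^ i * (1 - X) ^ (n - i) := by
      refine sum_nbij' (n - ·) (n - ·) ?_ ?_ ?_ ?_ fun k hk => by
        rw [Nat.sub_sub_self (mem_range.1 hk).le]
      all_goals intro k hk; simp only [mem_range, mem_Icc] at hk ⊢; omega

theorem eulerian_polynomial_frobenius (n : ℕ) (hn : 1 ≤ n) :
    (∑ π : Equiv.Perm (Fin n), (X : ℝ[X]) ^ (1 + descNum π)) =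
      ∑ i ∈ Finset.Icc 1 n,
        C ((Nat.factorial i * stirling2 n i : ℕ) : ℝ) * X ^ i * (1 - X) ^ (n - i) := by
  have hdes (π : Equiv.Perm (Fin n)) : descNum π < n :=
    (card_le_card π.descents_subset_range).trans_lt (by rw [card_range]; omega)
  calc ∑ π : Equiv.Perm (Fin n), (X : ℝ[X]) ^ (1 + descNum π)
      = ∑ π : Equiv.Perm (Fin n), ∑ i ∈ Icc 1 n,
          C (((n - 1 - descNum π).choose (n - i) : ℕ) : ℝ) * X ^ i * (1 - X) ^ (n - i) :=
        sum_congr rfl fun π _ => X_pow_eq_sum_choose_mul_X_pow_mul_one_sub_X_pow (hdes π)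
    _ = ∑ i ∈ Icc 1 n, ∑ π : Equiv.Perm (Fin n),
          C (((n - 1 - descNum π).choose (n - i) : ℕ) : ℝ) * X ^ i * (1 - X) ^ (n - i) :=
        sum_comm
    _ = _ := sum_congr rfl fun i hi => by
        rw [← sum_mul, ← sum_mul, ← map_sum C, ← Nat.cast_sum,
          sum_choose_sub_descNum_eq_factorial_mul_stirling2 (mem_Icc.1 hi).1 (mem_Icc.1 hi).2]
end

section
/- Let a_1, b_1 be positive reals and a_2, b_2 be reals, and define the array F_{n,k} by F_{n,k} = (a_1·k + a_2)·F_{n-1,k} + (b_1·k + b_2)·F_{n-1,k-1} with F_{0,0}=1 and F_{n,k}=0 unless 0 ≤ k ≤ n. Then F_{n,k} = C(b_2/b_1 + k, k)·(b_1/a_1)^k·Σ_{j=0}^k C(k,j)·(-1)^(k-j)·(a_2 + a_1·j)^n for all n,k ≥ 0, where C(b_2/b_1 + k, k) denotes the generalized binomial coefficient (b_2/b_1+k)(b_2/b_1+k-1)···(b_2/b_1+1)/k!. -/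
/-!
The sum is the `k`-th forward difference `Δ^k` with step `a₁` of `x ↦ x ^ n` at `a₂`. The Leibniz
rule `Δ^(k+1) (x g) y = (y + (k+1) h) Δ^(k+1) g y + (k+1) h Δ^k g y` shows that these differences
satisfy the triangle's recurrence with `b₁ = a₁`, `b₂ = 0`; the prefactor `c k`, which obeys
`a₁ (k+1) c (k+1) = (b₁ (k+1) + b₂) c k`, turns this into the general recurrence. A triangle is
determined by its recurrence and boundary values, so the two agree.
-/

/-- Generalized binomial coefficient `C(x, k) = x(x-1)⋯(x-k+1)/k!` for real `x`. -/
noncomputable def genChoose (x : ℝ) (k : ℕ) : ℝ :=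
  (∏ j ∈ Finset.range k, (x - (j : ℝ))) / (Nat.factorial k : ℝ)

open Finset fwdDiff

theorem genChoose_add_one_succ_mul (x : ℝ) (k : ℕ) :
    genChoose (x + 1) (k + 1) * (k + 1) = (x + 1) * genChoose x k := by
  rw [genChoose, genChoose, prod_range_succ', Nat.factorial_succ]
  push_cast
  simp only [add_sub_add_right_eq_sub, sub_zero]
  field_simp

section ForwardDifference

variable {R : Type*} [CommRing R]

theorem fwdDiff_id_mul (h : R) (g : R → R) :
    Δ_[h] (fun x ↦ x * g x) = (fun x ↦ x * Δ_[h] g x) + h • (Δ_[h] g + g) := by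
  ext x
  simp only [fwdDiff, Pi.add_apply, Pi.smul_apply, smul_eq_mul]
  ring

theorem fwdDiff_iter_succ_id_mul (h : R) (g : R → R) (m : ℕ) (y : R) :
    Δ_[h] ^[m + 1] (fun x ↦ x * g x) y =
      (y + (m + 1) * h) * Δ_[h] ^[m + 1] g y + (m + 1) * h * Δ_[h] ^[m] g y := by
  induction m generalizing g with
  | zero =>
    rw [zero_add, Function.iterate_one, Function.iterate_zero_apply, fwdDiff_id_mul]
    simp only [Pi.add_apply, Pi.smul_apply, smul_eq_mul, Nat.cast_zero]
    ring
  | succ m ih =>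
    rw [Function.iterate_succ_apply, fwdDiff_id_mul, fwdDiff_iter_add, fwdDiff_iter_const_smul,
      fwdDiff_iter_add, Pi.add_apply, Pi.smul_apply, Pi.add_apply, smul_eq_mul, ih,
      ← Function.iterate_succ_apply, ← Function.iterate_succ_apply]
    push_cast
    ring

theorem fwdDiff_iter_succ_pow_succ (h y : R) (m n : ℕ) :
    Δ_[h] ^[m + 1] (· ^ (n + 1)) y =
      (y + (m + 1) * h) * Δ_[h] ^[m + 1] (· ^ n) y + (m + 1) * h * Δ_[h] ^[m] (· ^ n) y := by
  simp only [pow_succ']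
  exact fwdDiff_iter_succ_id_mul h _ m y

theorem fwdDiff_iter_succ_pow_zero (h y : R) (m : ℕ) : Δ_[h] ^[m + 1] (· ^ 0) y = 0 := by
  simp only [pow_zero, Function.iterate_succ_apply, fwdDiff_const]
  exact congrFun (Function.iterate_fixed (fwdDiff_const h 0) m) y

theorem fwdDiff_iter_pow_eq_sum (h y : R) (n k : ℕ) :
    Δ_[h] ^[k] (· ^ n) y =
      ∑ j ∈ range (k + 1), (k.choose j : R) * (-1) ^ (k - j) * (y + h * j) ^ n := by
  rw [fwdDiff_iter_eq_sum_shift]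
  refine sum_congr rfl fun j _ ↦ ?_
  rw [zsmul_eq_mul, nsmul_eq_mul]
  push_cast
  ring

end ForwardDifference

theorem eq_of_triangle_recurrence {R : Type*} [Ring R] {a₁ a₂ b₁ b₂ : R}
    {F : ℕ → ℤ → R} {T : ℕ → ℕ → R}
    (h0 : F 0 0 = 1)
    (hb : ∀ (n : ℕ) (k : ℤ), (k < 0 ∨ (n : ℤ) < k) → F n k = 0)
    (hrec : ∀ (n : ℕ) (k : ℤ),
      F (n + 1) k = (a₁ * (k : R) + a₂) * F n k + (b₁ * (k : R) + b₂) * F n (k - 1))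
    (hT₀₀ : T 0 0 = 1) (hT₀ : ∀ k, T 0 (k + 1) = 0) (hT_zero : ∀ n, T (n + 1) 0 = a₂ * T n 0)
    (hT : ∀ n k, T (n + 1) (k + 1) =
      (a₁ * (k + 1) + a₂) * T n (k + 1) + (b₁ * (k + 1) + b₂) * T n k) :
    ∀ n k : ℕ, F n k = T n k := by
  intro n
  induction n with
  | zero =>
    rintro (_ | k)
    · exact h0.trans hT₀₀.symm
    · rw [hT₀, hb 0 _ (Or.inr (by omega))]
  | succ n ih =>
    rintro (_ | k)
    · rw [hT_zero, ← ih, Nat.cast_zero, hrec, hb n (0 - 1) (Or.inl (by omega))]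
      simp
    · rw [hT, ← ih, ← ih, hrec]
      push_cast
      rw [add_sub_cancel_right]

theorem generalized_frobenius_triangle_explicit
    (a₁ a₂ b₁ b₂ : ℝ) (ha₁ : 0 < a₁) (hb₁ : 0 < b₁)
    (F : ℕ → ℤ → ℝ)
    (h0 : F 0 0 = 1)
    (hb : ∀ (n : ℕ) (k : ℤ), (k < 0 ∨ (n : ℤ) < k) → F n k = 0)
    (hrec : ∀ (n : ℕ) (k : ℤ),
      F (n + 1) k = (a₁ * (k : ℝ) + a₂) * F n k + (b₁ * (k : ℝ) + b₂) * F n (k - 1)) :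
    ∀ n k : ℕ, F n (k : ℤ) =
      genChoose (b₂ / b₁ + (k : ℝ)) k * (b₁ / a₁) ^ k *
        ∑ j ∈ Finset.range (k + 1),
          (k.choose j : ℝ) * (-1 : ℝ) ^ (k - j) * (a₂ + a₁ * (j : ℝ)) ^ n := by
  set c : ℕ → ℝ := fun k ↦ genChoose (b₂ / b₁ + k) k * (b₁ / a₁) ^ k with hc_def
  have hc : ∀ k : ℕ, c (k + 1) * (a₁ * (k + 1)) = (b₁ * (k + 1) + b₂) * c k := by
    intro k
    have hG := genChoose_add_one_succ_mul (b₂ / b₁ + k) k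
    simp only [hc_def, Nat.cast_succ, ← add_assoc]
    generalize genChoose (b₂ / b₁ + k + 1) (k + 1) = G₁ at hG ⊢
    generalize genChoose (b₂ / b₁ + k) k = G₀ at hG ⊢
    rw [pow_succ]
    field_simp at hG ⊢
    linear_combination hG
  intro n k
  simp only [← fwdDiff_iter_pow_eq_sum]
  refine eq_of_triangle_recurrence (T := fun n k ↦ c k * Δ_[a₁] ^[k] (· ^ n) a₂) h0 hb hrec
    ?_ (fun k ↦ ?_) (fun n ↦ ?_) (fun n k ↦ ?_) n k
  · simp [hc_def, genChoose]
  · simp only [fwdDiff_iter_succ_pow_zero, mul_zero]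
  · simp only [Function.iterate_zero_apply, pow_succ]
    ring
  · simp only [fwdDiff_iter_succ_pow_succ]
    linear_combination Δ_[a₁] ^[k] (· ^ n) a₂ * hc k
end

section
/- Let λ > 0, c, b_1 real with b_1 = d·a_1 - c, and a_0, a_1, a_2, b_0, b_2, d ≥ 0. Define T_{n,k} by the recurrence T_{n,k} = λ(a_0 n + a_1 k + a_2)T_{n-1,k} + (b_0 n + b_1 k + b_2)T_{n-1,k-1} + (cd/λ)(n-k+1)T_{n-1,k-2}, with T_{0,0}=1 and T_{n,k}=0 unless 0 ≤ k ≤ n. Define A_{n,k} by A_{n,k} = (a_0 n + a_1 k + a_2)A_{n-1,k} + ([b_0 + d(a_1 - a_0)]n - (c + d a_1)k + b_2 + d(a_1 - a_2))A_{n-1,k-1}, with A_{0,0}=1 and A_{n,k}=0 unless 0 ≤ k ≤ n. Then for all n, k ≥ 0, T_{n,k} = Σ_{i≥0} A_{n,i}·C(n-i, k-i)·λ^(n-k)·d^(k-i). -/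
/-!
Put `P_m(j) = C(m, j) λ^(m-j) d^j`, the coefficient of `x^j` in `(λ + d x)^m`, so that the claim
reads `T_n(x) = Σ_i A_{n,i} x^i (λ + d x)^(n-i)`. It suffices to check that the right-hand side
obeys the recurrence of `T`. Pascal's rule `P_{m+1}(j) = λ P_m(j) + d P_m(j-1)` turns the
recurrence of `A` into one for the convolution, and the two recurrences then differ only by
multiples of `λ j P_m(j) - d (m - j + 1) P_m(j-1)`, which vanishes: it is the coefficient form of
`(λ + d x) f' = m d f` for `f = (λ + d x)^m`.
-/

open Finset

/-- The coefficient of `x ^ j` in `(lam + d x) ^ m`; zero for `j < 0`. -/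
def binomWeight {R : Type*} [CommSemiring R] (lam d : R) (m : ℕ) : ℤ → R
  | (j : ℕ) => m.choose j * lam ^ (m - j) * d ^ j
  | Int.negSucc _ => 0

namespace binomWeight

section CommSemiring

variable {R : Type*} [CommSemiring R] (lam d : R)

@[simp] lemma natCast (m j : ℕ) :
    binomWeight lam d m j = m.choose j * lam ^ (m - j) * d ^ j := rfl

@[simp] lemma zero_right (m : ℕ) : binomWeight lam d m 0 = lam ^ m := by
  simpa using natCast lam d m 0

lemma of_neg (m : ℕ) : ∀ {j : ℤ}, j < 0 → binomWeight lam d m j = 0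
  | (_ : ℕ), h => absurd h (by omega)
  | Int.negSucc _, _ => rfl

lemma zero_left {j : ℤ} (hj : j ≠ 0) : binomWeight lam d 0 j = 0 := by
  rcases lt_or_ge j 0 with hneg | hnonneg
  · exact of_neg lam d 0 hneg
  lift j to ℕ using hnonneg
  simp [Nat.choose_eq_zero_of_lt (Nat.pos_of_ne_zero (by exact_mod_cast hj))]

lemma natCast_sub_natCast (n : ℕ) {i k : ℕ} (hik : i ≤ k) :
    binomWeight lam d (n - i) ((k : ℤ) - i) =
      (n - i).choose (k - i) * lam ^ (n - k) * d ^ (k - i) := by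
  rw [show (k : ℤ) - i = ((k - i : ℕ) : ℤ) by omega, natCast,
    show n - i - (k - i) = n - k by omega]

lemma choose_succ_mul_pow (m j : ℕ) :
    (m.choose (j + 1) : R) * lam ^ (m - j) = lam * (m.choose (j + 1) * lam ^ (m - (j + 1))) := by
  rcases lt_or_ge j m with hjm | hjm
  · rw [show m - j = m - (j + 1) + 1 by omega, pow_succ]
    ring
  · simp [Nat.choose_eq_zero_of_lt (show m < j + 1 by omega)]

lemma succ_left (m : ℕ) (j : ℤ) :
    binomWeight lam d (m + 1) j =
      lam * binomWeight lam d m j + d * binomWeight lam d m (j - 1) := by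
  rcases lt_or_ge j 0 with hneg | hnonneg
  · simp [of_neg, hneg, show j - 1 < 0 by omega]
  lift j to ℕ using hnonneg
  cases j with
  | zero => simp [of_neg, pow_succ, mul_comm]
  | succ j =>
    rw [show ((j + 1 : ℕ) : ℤ) - 1 = j by omega, natCast, natCast, natCast,
      Nat.choose_succ_succ', Nat.succ_sub_succ, Nat.cast_add, add_mul, add_mul,
      choose_succ_mul_pow]
    ring

end CommSemiring

section CommRing

variable {R : Type*} [CommRing R] (lam d : R)

lemma lam_mul_index_eq (m : ℕ) (j : ℤ) :
    lam * j * binomWeight lam d m j = d * (m - j + 1) * binomWeight lam d m (j - 1) := by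
  rcases lt_or_ge j 0 with hneg | hnonneg
  · simp [of_neg, hneg, show j - 1 < 0 by omega]
  lift j to ℕ using hnonneg
  cases j with
  | zero => simp [of_neg]
  | succ j =>
    have hchoose : (m.choose (j + 1) : R) * (j + 1) = m.choose j * (m - j) := by
      rcases le_or_gt j m with hjm | hjm
      · have h := congrArg (Nat.cast : ℕ → R) (Nat.choose_succ_right_eq m j)
        push_cast [hjm] at h
        exact h
      · simp [Nat.choose_eq_zero_of_lt hjm, Nat.choose_eq_zero_of_lt (show m < j + 1 by omega)]
    rw [show ((j + 1 : ℕ) : ℤ) - 1 = j by omega, natCast, natCast]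
    push_cast
    linear_combination lam ^ (m - j) * d ^ (j + 1) * hchoose -
      (j + 1 : R) * d ^ (j + 1) * choose_succ_mul_pow lam m j

end CommRing

/-- The per-term identity behind the theorem, with `m = n - i`, `j = k - i` and `x = i`. -/
lemma recurrence_transfer {K : Type*} [Field K] {lam : K} (hlam : lam ≠ 0)
    (d a₀ a₁ a₂ b₀ b₂ c x : K) (m : ℕ) (j : ℤ) :
    (a₀ * (m + x + 1) + a₁ * x + a₂) * binomWeight lam d (m + 1) j +
      ((b₀ + d * (a₁ - a₀)) * (m + x + 1) - (c + d * a₁) * (x + 1) + b₂ +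
        d * (a₁ - a₂)) * binomWeight lam d m (j - 1) =
    lam * (a₀ * (m + x + 1) + a₁ * (x + j) + a₂) * binomWeight lam d m j +
      (b₀ * (m + x + 1) + (d * a₁ - c) * (x + j) + b₂) * binomWeight lam d m (j - 1) +
      c * d / lam * (m - j + 2) * binomWeight lam d m (j - 2) := by
  have h₁ := lam_mul_index_eq lam d m j
  have h₂ := lam_mul_index_eq lam d m (j - 1)
  rw [sub_sub, show (1 + 1 : ℤ) = 2 by norm_num] at h₂
  push_cast at h₂
  rw [succ_left]
  field_simp
  linear_combination (-a₁ * lam) * h₁ + c * h₂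

end binomWeight

lemma sum_range_succ_mul_of_recurrence {R : Type*} [CommRing R] {f g α β : ℤ → R} {n : ℕ}
    (hrec : ∀ k, g k = α k * f k + β k * f (k - 1)) (hlow : f (-1) = 0) (hhigh : f n = 0)
    (Q : ℕ → R) :
    ∑ i ∈ range (n + 1), g i * Q i =
      ∑ i ∈ range n, f i * (α i * Q i + β (i + 1) * Q (i + 1)) := by
  simp only [hrec, add_mul, sum_add_distrib, mul_add]
  rw [sum_range_succ, hhigh, sum_range_succ' _ n]
  simp only [Nat.cast_zero, zero_sub, hlow, Nat.cast_succ, add_sub_cancel_right, mul_zero,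
    zero_mul, add_zero]
  congr 1 <;> exact sum_congr rfl fun i _ => by ring

lemma sum_range_mul_binomWeight {R : Type*} [CommSemiring R] (lam d : R) {f : ℤ → R} {n : ℕ}
    (hf : ∀ i : ℕ, n < i → f i = 0) (k : ℕ) :
    ∑ i ∈ range (n + 1), f i * binomWeight lam d (n - i) ((k : ℤ) - i) =
      ∑ i ∈ range (k + 1), f i * (n - i).choose (k - i) * lam ^ (n - k) * d ^ (k - i) := calc
  _ = ∑ i ∈ range (n + k + 1), f i * binomWeight lam d (n - i) ((k : ℤ) - i) :=
      sum_subset (range_subset_range.2 (by omega)) fun i _ hin => by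
        rw [hf i (by simp only [mem_range] at hin; omega), zero_mul]
  _ = ∑ i ∈ range (k + 1), f i * binomWeight lam d (n - i) ((k : ℤ) - i) :=
      (sum_subset (range_subset_range.2 (by omega)) fun i _ hik => by
        rw [binomWeight.of_neg lam d _ (by simp only [mem_range] at hik; omega), mul_zero]).symm
  _ = _ := sum_congr rfl fun i hi => by
      rw [binomWeight.natCast_sub_natCast lam d n (by simpa [Nat.lt_succ_iff] using hi)]
      ring

theorem transformation_entrywise_general
    (lam c b₁ a₀ a₁ a₂ b₀ b₂ d : ℝ)
    (hlam : 0 < lam) (hb₁ : b₁ = d * a₁ - c)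
    (T A : ℕ → ℤ → ℝ)
    (hT0 : T 0 0 = 1)
    (hTb : ∀ (n : ℕ) (k : ℤ), (k < 0 ∨ (n : ℤ) < k) → T n k = 0)
    (hTrec : ∀ (n : ℕ) (k : ℤ),
      T (n + 1) k =
        lam * (a₀ * ((n : ℝ) + 1) + a₁ * (k : ℝ) + a₂) * T n k +
        (b₀ * ((n : ℝ) + 1) + b₁ * (k : ℝ) + b₂) * T n (k - 1) +
        (c * d / lam) * ((n : ℝ) + 1 - (k : ℝ) + 1) * T n (k - 2))
    (hA0 : A 0 0 = 1)
    (hAb : ∀ (n : ℕ) (k : ℤ), (k < 0 ∨ (n : ℤ) < k) → A n k = 0)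
    (hArec : ∀ (n : ℕ) (k : ℤ),
      A (n + 1) k =
        (a₀ * ((n : ℝ) + 1) + a₁ * (k : ℝ) + a₂) * A n k +
        ((b₀ + d * (a₁ - a₀)) * ((n : ℝ) + 1) - (c + d * a₁) * (k : ℝ) +
          b₂ + d * (a₁ - a₂)) * A n (k - 1)) :
    ∀ n k : ℕ, T n (k : ℤ) =
      ∑ i ∈ Finset.range (k + 1),
        A n (i : ℤ) * ((n - i).choose (k - i) : ℝ) * lam ^ (n - k) * d ^ (k - i) := by
  subst hb₁
  have hconv : ∀ n (k : ℤ),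
      T n k = ∑ i ∈ range (n + 1), A n i * binomWeight lam d (n - i) (k - i) := by
    intro n
    induction n with
    | zero =>
      intro k
      rcases eq_or_ne k 0 with rfl | hk
      · simp [hT0, hA0]
      · rw [hTb 0 k (by omega)]
        simp [binomWeight.zero_left _ _ hk]
    | succ n ih =>
      intro k
      rw [hTrec, ih, ih, ih, sum_range_succ_mul_of_recurrence (hArec n) (hAb n _ (by omega))
        (hAb n _ (by omega)), mul_sum, mul_sum, mul_sum, ← sum_add_distrib, ← sum_add_distrib]
      refine sum_congr rfl fun i hi => ?_
      have hin : i ≤ n := Nat.lt_succ_iff.1 (mem_range.1 hi)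
      have htransfer :=
        binomWeight.recurrence_transfer hlam.ne' d a₀ a₁ a₂ b₀ b₂ c i (n - i) (k - i)
      rw [show n + 1 - i = n - i + 1 by omega, show n + 1 - (i + 1) = n - i by omega,
        show k - ((i + 1 : ℕ) : ℤ) = k - i - 1 by push_cast; ring,
        show k - 1 - i = k - i - 1 by ring, show k - 2 - i = k - i - 2 by ring]
      push_cast [Nat.cast_sub hin] at htransfer ⊢
      linear_combination -A n i * htransfer
  intro n k
  rw [hconv, sum_range_mul_binomWeight lam d (fun i hi => hAb n i (by omega))]

theorem transformation_entrywise
    (lam c b₁ a₀ a₁ a₂ b₀ b₂ d : ℝ)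
    (hlam : 0 < lam) (hb₁ : b₁ = d * a₁ - c)
    (ha₀ : 0 ≤ a₀) (ha₁ : 0 ≤ a₁) (ha₂ : 0 ≤ a₂) (hb₀ : 0 ≤ b₀) (hb₂ : 0 ≤ b₂) (hd : 0 ≤ d)
    (T A : ℕ → ℤ → ℝ)
    (hT0 : T 0 0 = 1)
    (hTb : ∀ (n : ℕ) (k : ℤ), (k < 0 ∨ (n : ℤ) < k) → T n k = 0)
    (hTrec : ∀ (n : ℕ) (k : ℤ),
      T (n + 1) k =
        lam * (a₀ * ((n : ℝ) + 1) + a₁ * (k : ℝ) + a₂) * T n k +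
        (b₀ * ((n : ℝ) + 1) + b₁ * (k : ℝ) + b₂) * T n (k - 1) +
        (c * d / lam) * ((n : ℝ) + 1 - (k : ℝ) + 1) * T n (k - 2))
    (hA0 : A 0 0 = 1)
    (hAb : ∀ (n : ℕ) (k : ℤ), (k < 0 ∨ (n : ℤ) < k) → A n k = 0)
    (hArec : ∀ (n : ℕ) (k : ℤ),
      A (n + 1) k =
        (a₀ * ((n : ℝ) + 1) + a₁ * (k : ℝ) + a₂) * A n k +
        ((b₀ + d * (a₁ - a₀)) * ((n : ℝ) + 1) - (c + d * a₁) * (k : ℝ) +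
          b₂ + d * (a₁ - a₂)) * A n (k - 1)) :
    ∀ n k : ℕ, T n (k : ℤ) =
      ∑ i ∈ Finset.range (k + 1),
        A n (i : ℤ) * ((n - i).choose (k - i) : ℝ) * lam ^ (n - k) * d ^ (k - i) :=
  transformation_entrywise_general lam c b₁ a₀ a₁ a₂ b₀ b₂ d hlam hb₁ T A hT0 hTb hTrec hA0 hAb
    hArec
end

section
/- Under the hypotheses of the transformation theorem (b_1 = d·a_1 - c), the row-generating functions T_n(x) = Σ_k T_{n,k} x^k and A_n(x) = Σ_k A_{n,k} x^k satisfy the polynomial identity T_n(x) = (λ + dx)^n · A_n(x/(λ + dx)), i.e., T_n(x) equals the polynomial obtained by substituting x/(λ+dx) into A_n and multiplying by (λ+dx)^n, for all n ≥ 0. -/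
/-!
Comparing coefficients of `x ^ m`, the identity says `T n m = ∑ k, A n k * g (n - k) (m - k)`,
where `g j i` is the coefficient of `x ^ i` in `(λ + d x) ^ j`. This goes by induction on `n`:
feeding the recurrence of `A` into the right side and shifting `k` by one, Pascal's rule for `g`
makes every coefficient of the two recurrences match except those of `a₁` and `c`, and these two
discrepancies are instances of the ratio of consecutive binomial terms,
`λ i g j i = d (j - i + 1) g j (i - 1)`.
-/

open Polynomial Finset

/-- The coefficient of `X ^ i` in `(C lam + C d * X) ^ j`, extended by `0` to negative `i`. -/
noncomputable def linPowCoeff (lam d : ℝ) : ℕ → ℤ → ℝ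
  | 0, i => if i = 0 then 1 else 0
  | j + 1, i => lam * linPowCoeff lam d j i + d * linPowCoeff lam d j (i - 1)

section linPowCoeff

variable (lam d : ℝ)

lemma linPowCoeff_succ (j : ℕ) (i : ℤ) :
    linPowCoeff lam d (j + 1) i = lam * linPowCoeff lam d j i + d * linPowCoeff lam d j (i - 1) :=
  rfl

lemma linPowCoeff_of_neg : ∀ (j : ℕ) {i : ℤ}, i < 0 → linPowCoeff lam d j i = 0
  | 0, _, hi => if_neg hi.ne
  | j + 1, i, hi => by
    rw [linPowCoeff_succ, linPowCoeff_of_neg j hi, linPowCoeff_of_neg j (by omega : i - 1 < 0)]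
    ring

lemma lam_mul_linPowCoeff : ∀ (j : ℕ) (i : ℤ),
    lam * i * linPowCoeff lam d j i = d * (j - i + 1) * linPowCoeff lam d j (i - 1)
  | 0, i => by
    rcases eq_or_ne i 0 with rfl | h₀
    · simp [linPowCoeff]
    rcases eq_or_ne i 1 with rfl | h₁
    · simp [linPowCoeff]
    simp [linPowCoeff, h₀, sub_eq_zero, h₁]
  | j + 1, i => by
    have h₁ := lam_mul_linPowCoeff j i
    have h₂ := lam_mul_linPowCoeff j (i - 1)
    simp only [linPowCoeff_succ]
    push_cast at h₁ h₂ ⊢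
    linear_combination lam * h₁ + d * h₂

lemma coeff_linPow (j m : ℕ) :
    ((C lam + C d * X) ^ j).coeff m = linPowCoeff lam d j m := by
  induction j generalizing m with
  | zero =>
    rcases eq_or_ne m 0 with rfl | hm
    · simp [linPowCoeff]
    · simp [linPowCoeff, coeff_one, hm]
  | succ j ih =>
    rw [pow_succ', add_mul, mul_assoc, coeff_add, coeff_C_mul, coeff_C_mul, linPowCoeff_succ, ih]
    cases m with
    | zero => simp [linPowCoeff_of_neg]
    | succ m => simp [ih]

lemma coeff_C_mul_X_pow_mul_linPow (a : ℝ) (k j m : ℕ) :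
    (C a * X ^ k * (C lam + C d * X) ^ j).coeff m = a * linPowCoeff lam d j (m - k) := by
  rw [mul_right_comm, coeff_mul_X_pow']
  split_ifs with hk
  · rw [coeff_C_mul, coeff_linPow, Nat.cast_sub hk]
  · rw [linPowCoeff_of_neg lam d j (by omega), mul_zero]

end linPowCoeff

lemma coeff_sum_range_C_mul_X_pow {t : ℤ → ℝ} {n : ℕ} (ht : ∀ k : ℤ, (n : ℤ) < k → t k = 0)
    (m : ℕ) : (∑ k ∈ range (n + 1), C (t k) * X ^ k).coeff m = t m := by
  simp only [finsetSum_coeff, coeff_C_mul_X_pow, sum_ite_eq, mem_range]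
  split_ifs with hm
  · rfl
  · exact (ht m (by omega)).symm

lemma sum_range_succ_mul_of_eq_mul_add_mul {A B : ℤ → ℝ} {p q h : ℕ → ℝ} {n : ℕ}
    (hB : ∀ k : ℕ, B k = p k * A k + q k * A (k - 1)) (hA₀ : A (-1) = 0) (hAn : A (n + 1) = 0) :
    ∑ k ∈ range (n + 2), B k * h k =
      ∑ k ∈ range (n + 1), A k * (p k * h k + q (k + 1) * h (k + 1)) := by
  calc ∑ k ∈ range (n + 2), B k * h k
      = ∑ k ∈ range (n + 2), p k * A k * h k + ∑ k ∈ range (n + 2), q k * A (k - 1) * h k := by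
        simp only [hB, add_mul, sum_add_distrib]
    _ = ∑ k ∈ range (n + 1), p k * A k * h k + ∑ k ∈ range (n + 1), q (k + 1) * A k * h (k + 1) := by
        rw [sum_range_succ _ (n + 1), sum_range_succ' _ (n + 1)]
        push_cast
        simp [hAn, hA₀]
    _ = _ := by
        rw [← sum_add_distrib]
        exact sum_congr rfl fun k _ => by ring

section transfer

variable (lam d c a₀ a₁ a₂ b₀ b₂ : ℝ)

lemma linPowCoeff_transfer (hlam : lam ≠ 0) {n k : ℕ} (hk : k ≤ n) (m : ℤ) :
    lam * (a₀ * (n + 1) + a₁ * m + a₂) * linPowCoeff lam d (n - k) (m - k) +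
        (b₀ * (n + 1) + (d * a₁ - c) * m + b₂) * linPowCoeff lam d (n - k) (m - k - 1) +
        c * d / lam * (n + 1 - m + 1) * linPowCoeff lam d (n - k) (m - k - 2) =
      (a₀ * (n + 1) + a₁ * k + a₂) * linPowCoeff lam d (n - k + 1) (m - k) +
        ((b₀ + d * (a₁ - a₀)) * (n + 1) - (c + d * a₁) * (k + 1) + b₂ + d * (a₁ - a₂)) *
          linPowCoeff lam d (n - k) (m - k - 1) := by
  have hj : ((n - k : ℕ) : ℝ) = n - k := Nat.cast_sub hk
  have key₁ := lam_mul_linPowCoeff lam d (n - k) (m - k)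
  have key₂ := lam_mul_linPowCoeff lam d (n - k) (m - k - 1)
  rw [show m - k - 1 - 1 = m - k - 2 by ring] at key₂
  push_cast [hj] at key₁ key₂
  have key₂' : c * (m - k - 1) * linPowCoeff lam d (n - k) (m - k - 1) =
      c * d / lam * (n - m + 2) * linPowCoeff lam d (n - k) (m - k - 2) := by
    field_simp
    linear_combination c * key₂
  rw [linPowCoeff_succ]
  linear_combination a₁ * key₁ - key₂'

variable {lam d c a₀ a₁ a₂ b₀ b₂}

theorem eq_sum_mul_linPowCoeff (hlam : lam ≠ 0) {T A : ℕ → ℤ → ℝ}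
    (hT0 : T 0 0 = 1) (hTb : ∀ (n : ℕ) (k : ℤ), (k < 0 ∨ (n : ℤ) < k) → T n k = 0)
    (hTrec : ∀ (n : ℕ) (k : ℤ),
      T (n + 1) k =
        lam * (a₀ * ((n : ℝ) + 1) + a₁ * (k : ℝ) + a₂) * T n k +
        (b₀ * ((n : ℝ) + 1) + (d * a₁ - c) * (k : ℝ) + b₂) * T n (k - 1) +
        (c * d / lam) * ((n : ℝ) + 1 - (k : ℝ) + 1) * T n (k - 2))
    (hA0 : A 0 0 = 1) (hAb : ∀ (n : ℕ) (k : ℤ), (k < 0 ∨ (n : ℤ) < k) → A n k = 0)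
    (hArec : ∀ (n : ℕ) (k : ℤ),
      A (n + 1) k =
        (a₀ * ((n : ℝ) + 1) + a₁ * (k : ℝ) + a₂) * A n k +
        ((b₀ + d * (a₁ - a₀)) * ((n : ℝ) + 1) - (c + d * a₁) * (k : ℝ) +
          b₂ + d * (a₁ - a₂)) * A n (k - 1))
    (n : ℕ) (m : ℤ) :
    T n m = ∑ k ∈ range (n + 1), A n k * linPowCoeff lam d (n - k) (m - k) := by
  induction n generalizing m with
  | zero =>
    rcases eq_or_ne m 0 with rfl | hm
    · simp [hT0, hA0, linPowCoeff]
    · simp [hTb 0 m (by omega), linPowCoeff, hm]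
  | succ n ih =>
    rw [hTrec, ih, ih, ih, mul_sum, mul_sum, mul_sum, ← sum_add_distrib, ← sum_add_distrib,
      sum_range_succ_mul_of_eq_mul_add_mul (fun k => hArec n k) (hAb n _ (by omega))
        (hAb n _ (by omega))]
    refine sum_congr rfl fun k hk => ?_
    have hk : k ≤ n := mem_range_succ_iff.mp hk
    rw [Nat.add_sub_add_right, Nat.sub_add_comm hk]
    push_cast
    rw [sub_right_comm m 1, sub_right_comm m 2, ← sub_sub]
    linear_combination A n k * linPowCoeff_transfer lam d c a₀ a₁ a₂ b₀ b₂ hlam hk m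

end transfer

theorem transformation_row_generating_functions_general
    (lam c b₁ a₀ a₁ a₂ b₀ b₂ d : ℝ)
    (hlam : 0 < lam) (hb₁ : b₁ = d * a₁ - c)
    (T A : ℕ → ℤ → ℝ)
    (hT0 : T 0 0 = 1)
    (hTb : ∀ (n : ℕ) (k : ℤ), (k < 0 ∨ (n : ℤ) < k) → T n k = 0)
    (hTrec : ∀ (n : ℕ) (k : ℤ),
      T (n + 1) k =
        lam * (a₀ * ((n : ℝ) + 1) + a₁ * (k : ℝ) + a₂) * T n k +
        (b₀ * ((n : ℝ) + 1) + b₁ * (k : ℝ) + b₂) * T n (k - 1) +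
        (c * d / lam) * ((n : ℝ) + 1 - (k : ℝ) + 1) * T n (k - 2))
    (hA0 : A 0 0 = 1)
    (hAb : ∀ (n : ℕ) (k : ℤ), (k < 0 ∨ (n : ℤ) < k) → A n k = 0)
    (hArec : ∀ (n : ℕ) (k : ℤ),
      A (n + 1) k =
        (a₀ * ((n : ℝ) + 1) + a₁ * (k : ℝ) + a₂) * A n k +
        ((b₀ + d * (a₁ - a₀)) * ((n : ℝ) + 1) - (c + d * a₁) * (k : ℝ) +
          b₂ + d * (a₁ - a₂)) * A n (k - 1)) :
    ∀ n : ℕ,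
      (∑ k ∈ Finset.range (n + 1), C (T n (k : ℤ)) * X ^ k) =
        ∑ k ∈ Finset.range (n + 1),
          C (A n (k : ℤ)) * X ^ k * (C lam + C d * X) ^ (n - k) := by
  subst hb₁
  intro n
  ext m
  rw [coeff_sum_range_C_mul_X_pow (fun k hk => hTb n k (Or.inr hk)), finsetSum_coeff,
    eq_sum_mul_linPowCoeff hlam.ne' hT0 hTb hTrec hA0 hAb hArec]
  simp only [coeff_C_mul_X_pow_mul_linPow]

theorem transformation_row_generating_functions
    (lam c b₁ a₀ a₁ a₂ b₀ b₂ d : ℝ)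
    (hlam : 0 < lam) (hb₁ : b₁ = d * a₁ - c)
    (ha₀ : 0 ≤ a₀) (ha₁ : 0 ≤ a₁) (ha₂ : 0 ≤ a₂) (hb₀ : 0 ≤ b₀) (hb₂ : 0 ≤ b₂) (hd : 0 ≤ d)
    (T A : ℕ → ℤ → ℝ)
    (hT0 : T 0 0 = 1)
    (hTb : ∀ (n : ℕ) (k : ℤ), (k < 0 ∨ (n : ℤ) < k) → T n k = 0)
    (hTrec : ∀ (n : ℕ) (k : ℤ),
      T (n + 1) k =
        lam * (a₀ * ((n : ℝ) + 1) + a₁ * (k : ℝ) + a₂) * T n k +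
        (b₀ * ((n : ℝ) + 1) + b₁ * (k : ℝ) + b₂) * T n (k - 1) +
        (c * d / lam) * ((n : ℝ) + 1 - (k : ℝ) + 1) * T n (k - 2))
    (hA0 : A 0 0 = 1)
    (hAb : ∀ (n : ℕ) (k : ℤ), (k < 0 ∨ (n : ℤ) < k) → A n k = 0)
    (hArec : ∀ (n : ℕ) (k : ℤ),
      A (n + 1) k =
        (a₀ * ((n : ℝ) + 1) + a₁ * (k : ℝ) + a₂) * A n k +
        ((b₀ + d * (a₁ - a₀)) * ((n : ℝ) + 1) - (c + d * a₁) * (k : ℝ) +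
          b₂ + d * (a₁ - a₂)) * A n (k - 1)) :
    ∀ n : ℕ,
      (∑ k ∈ Finset.range (n + 1), C (T n (k : ℤ)) * X ^ k) =
        ∑ k ∈ Finset.range (n + 1),
          C (A n (k : ℤ)) * X ^ k * (C lam + C d * X) ^ (n - k) :=
  transformation_row_generating_functions_general lam c b₁ a₀ a₁ a₂ b₀ b₂ d hlam hb₁ T A hT0 hTb
    hTrec hA0 hAb hArec
end

section
/- Let a_1, a_2 > 0 and c > 0, and let E_{n,k} satisfy E_{n,k} = (a_1 k + a_2)E_{n-1,k} + (a_1 n - a_1 k + a_2)E_{n-1,k-1} with E_{0,0}=1 and E_{n,k}=0 unless 0 ≤ k ≤ n. Let S_{n,k} satisfy S_{n,k} = (a_1 k + a_2)S_{n-1,k} + c(n - 2k + 1)S_{n-1,k-1} with S_{0,0}=1 and S_{n,k}=0 unless 0 ≤ k ≤ (n+1)/2. Then for all n ≥ 1, the row-generating functions satisfy E_n(x) = (1+x)^n · S_n((2a_1/c)·x/(1+x)^2) as an identity of polynomials (equivalently, of rational functions). -/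
/-!
Both sides satisfy the same recursion `P_{n+1} = (a₂ + (a₁ n + a₂) x) P_n + a₁ x (1 - x) P_n'`
(`eulerianStep`). For the `E`-rows this is the recurrence of `E` read off coefficientwise. On the
gamma basis the operator acts by
`x^k (1+x)^(n-2k) ↦ (a₁ k + a₂) x^k (1+x)^(n+1-2k) + 2 a₁ (n - 2k) x^(k+1) (1+x)^(n-1-2k)`,
and with `t = 2a₁/c`, i.e. `c t = 2 a₁`, the second term is exactly the `c (n - 2k + 2) S_{n,k-1}`
part of the recurrence of `S`, shifted by one. Induction on `n` from `E_0 = S_0 = 1` concludes.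
-/

open Polynomial Finset

section

variable {R : Type*} [CommRing R]

theorem coeff_X_mul_derivative (p : R[X]) (j : ℕ) :
    (X * derivative p).coeff j = j * p.coeff j := by
  cases j with
  | zero => simp
  | succ j => rw [coeff_X_mul, coeff_derivative, mul_comm]; push_cast; ring

theorem coeff_sum_range_C_mul_X_pow_s8 (f : ℕ → R) (N j : ℕ) :
    (∑ k ∈ range N, C (f k) * X ^ k).coeff j = if j < N then f j else 0 := by
  simp [finsetSum_coeff]

variable (a₁ a₂ : R)

noncomputable def eulerianStep (n : ℕ) : R[X] →ₗ[R] R[X] :=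
  LinearMap.mulLeft R (C a₂ + C (a₁ * n + a₂) * X) +
    LinearMap.mulLeft R (C a₁ * (X - X ^ 2)) ∘ₗ derivative

theorem eulerianStep_apply (n : ℕ) (p : R[X]) :
    eulerianStep a₁ a₂ n p =
      (C a₂ + C (a₁ * n + a₂) * X) * p + C a₁ * (X - X ^ 2) * derivative p :=
  rfl

theorem coeff_eulerianStep_zero (n : ℕ) (p : R[X]) :
    (eulerianStep a₁ a₂ n p).coeff 0 = a₂ * p.coeff 0 := by
  simp [eulerianStep_apply, add_mul, mul_sub, sub_mul, mul_assoc]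

theorem coeff_eulerianStep_succ (n : ℕ) (p : R[X]) (j : ℕ) :
    (eulerianStep a₁ a₂ n p).coeff (j + 1) =
      (a₁ * (j + 1) + a₂) * p.coeff (j + 1) + (a₁ * (n + 1) - a₁ * (j + 1) + a₂) * p.coeff j := by
  have h : (C a₂ + C (a₁ * n + a₂) * X) * p + C a₁ * (X - X ^ 2) * derivative p =
      C a₂ * p + C (a₁ * n + a₂) * (X * p) +
        C a₁ * (X * derivative p - X * (X * derivative p)) := by ring
  rw [eulerianStep_apply, h]
  simp only [coeff_add, coeff_sub, coeff_C_mul, coeff_X_mul_derivative, coeff_X_mul, coeff_derivative]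
  ring

theorem eulerianRow_succ (E : ℕ → ℤ → R)
    (hEb : ∀ (n : ℕ) (k : ℤ), (k < 0 ∨ (n : ℤ) < k) → E n k = 0)
    (hErec : ∀ (n : ℕ) (k : ℤ),
      E (n + 1) k = (a₁ * k + a₂) * E n k + (a₁ * (n + 1) - a₁ * k + a₂) * E n (k - 1))
    (n : ℕ) :
    ∑ k ∈ range (n + 1 + 1), C (E (n + 1) k) * X ^ k =
      eulerianStep a₁ a₂ n (∑ k ∈ range (n + 1), C (E n k) * X ^ k) := by
  have coeff_row : ∀ m j : ℕ, (∑ k ∈ range (m + 1), C (E m k) * X ^ k).coeff j = E m j := by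
    intro m j
    rw [coeff_sum_range_C_mul_X_pow_s8, ite_eq_left_iff, not_lt]
    exact fun hj => (hEb m j (Or.inr (by omega))).symm
  ext (_ | j)
  · rw [coeff_eulerianStep_zero, coeff_row, coeff_row, hErec, hEb n ((0 : ℕ) - 1) (Or.inl (by omega))]
    simp
  · rw [coeff_eulerianStep_succ, coeff_row, coeff_row, coeff_row, hErec,
      show ((j + 1 : ℕ) : ℤ) - 1 = j by omega]
    push_cast
    ring

theorem eulerianStep_C_mul_X_pow_mul_one_add_X_pow (s : R) {n k : ℕ} (hk : 2 * k ≤ n) :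
    eulerianStep a₁ a₂ n (C s * X ^ k * (1 + X) ^ (n - 2 * k)) =
      C ((a₁ * k + a₂) * s) * X ^ k * (1 + X) ^ (n + 1 - 2 * k) +
        C (2 * a₁ * (n - 2 * k) * s) * X ^ (k + 1) * (1 + X) ^ (n + 1 - 2 * (k + 1)) := by
  obtain ⟨m, rfl⟩ := Nat.exists_eq_add_of_le hk
  rw [show 2 * k + m - 2 * k = m by omega, show 2 * k + m + 1 - 2 * k = m + 1 by omega,
    show 2 * k + m + 1 - 2 * (k + 1) = m - 1 by omega, eulerianStep_apply]
  rcases k with _ | k <;> rcases m with _ | m <;>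
    simp [derivative_mul, derivative_pow, C_ofNat] <;> ring

theorem eulerianStep_gammaSum (n : ℕ) (γ γ' : ℕ → R) (hγ : ∀ k, n < 2 * k → γ k = 0)
    (hγ'_zero : γ' 0 = a₂ * γ 0)
    (hγ'_succ : ∀ k : ℕ,
      γ' (k + 1) = (a₁ * (k + 1) + a₂) * γ (k + 1) + 2 * a₁ * (n - 2 * k) * γ k) :
    eulerianStep a₁ a₂ n (∑ k ∈ range (n / 2 + 1), C (γ k) * X ^ k * (1 + X) ^ (n - 2 * k)) =
      ∑ k ∈ range (n / 2 + 2), C (γ' k) * X ^ k * (1 + X) ^ (n + 1 - 2 * k) := by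
  set A : ℕ → R[X] := fun k => C ((a₁ * k + a₂) * γ k) * X ^ k * (1 + X) ^ (n + 1 - 2 * k)
  set B : ℕ → R[X] := fun k =>
    C (2 * a₁ * (n - 2 * k) * γ k) * X ^ (k + 1) * (1 + X) ^ (n + 1 - 2 * (k + 1))
  have hγ'_term : ∀ k, C (γ' (k + 1)) * X ^ (k + 1) * (1 + X) ^ (n + 1 - 2 * (k + 1)) =
      A (k + 1) + B k := by
    intro k
    simp only [A, B, hγ'_succ, C_add, add_mul]
    push_cast
    ring
  have hA_shift : ∑ k ∈ range (n / 2 + 1), A k = ∑ k ∈ range (n / 2 + 1), A (k + 1) + A 0 := by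
    rw [← sum_range_succ' A, sum_range_succ A (n / 2 + 1), left_eq_add]
    simp [A, hγ (n / 2 + 1) (by omega)]
  have hT : eulerianStep a₁ a₂ n
      (∑ k ∈ range (n / 2 + 1), C (γ k) * X ^ k * (1 + X) ^ (n - 2 * k)) =
        ∑ k ∈ range (n / 2 + 1), (A k + B k) := by
    rw [map_sum]
    exact sum_congr rfl fun k hk => eulerianStep_C_mul_X_pow_mul_one_add_X_pow a₁ a₂ (γ k)
      (by have := mem_range.mp hk; omega)
  rw [hT, sum_range_succ' (fun k => C (γ' k) * X ^ k * (1 + X) ^ (n + 1 - 2 * k)),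
    sum_congr rfl fun k _ => hγ'_term k, sum_add_distrib, sum_add_distrib, hA_shift,
    hγ'_zero, add_right_comm]
  simp [A]

section GammaArray

variable {a₁ a₂} {c : R} {S : ℕ → ℤ → R}
  (hSb : ∀ (n : ℕ) (k : ℤ), (k < 0 ∨ (n : ℤ) + 1 < 2 * k) → S n k = 0)
  (hSrec : ∀ (n : ℕ) (k : ℤ),
    S (n + 1) k = (a₁ * k + a₂) * S n k + c * (n + 1 - 2 * k + 1) * S n (k - 1))
include hSb hSrec

theorem gammaArray_eq_zero_of_lt_two_mul {n : ℕ} {k : ℤ} (hk : (n : ℤ) < 2 * k) : S n k = 0 := by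
  rcases (show (n : ℤ) + 1 < 2 * k ∨ (n : ℤ) + 1 = 2 * k by omega) with hlt | heq
  · exact hSb n k (Or.inr hlt)
  · obtain ⟨m, rfl⟩ : ∃ m, n = m + 1 := Nat.exists_eq_succ_of_ne_zero (by omega)
    have hcoeff : ((m : R) + 1 - 2 * k + 1) = 0 := by
      have h2k : ((2 * k : ℤ) : R) = ((m + 2 : ℤ) : R) := congrArg _ (by omega)
      push_cast at h2k
      linear_combination -h2k
    rw [hSrec, hSb m k (Or.inr (by omega)), hcoeff]
    ring

theorem gammaRow_succ {t : R} (hct : c * t = 2 * a₁) (n : ℕ) :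
    ∑ k ∈ range ((n + 1) / 2 + 1), C (S (n + 1) k) * C t ^ k * X ^ k * (1 + X) ^ (n + 1 - 2 * k) =
      eulerianStep a₁ a₂ n
        (∑ k ∈ range (n / 2 + 1), C (S n k) * C t ^ k * X ^ k * (1 + X) ^ (n - 2 * k)) := by
  have hC : ∀ m k : ℕ, C (S m k) * C t ^ k = C (S m k * t ^ k) := by simp [C_mul, C_pow]
  simp only [hC]
  rw [eulerianStep_gammaSum a₁ a₂ n (fun k => S n k * t ^ k) (fun k => S (n + 1) k * t ^ k)]
  · refine sum_subset (range_subset_range.mpr (by omega)) fun k _ hk => ?_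
    rw [gammaArray_eq_zero_of_lt_two_mul hSb hSrec (by rw [mem_range] at hk; omega)]
    simp
  · intro k hk
    simp [gammaArray_eq_zero_of_lt_two_mul hSb hSrec (n := n) (k := k) (by omega)]
  · simp [hSrec, hSb n (-1) (Or.inl (by omega))]
  · intro k
    rw [hSrec, show ((k + 1 : ℕ) : ℤ) - 1 = k by omega]
    push_cast
    linear_combination ((n : R) - 2 * k) * S n k * t ^ k * hct

end GammaArray

end

theorem generalized_eulerian_gamma_decomposition_general
    (a₁ a₂ c : ℝ) (hc : 0 < c)
    (E S : ℕ → ℤ → ℝ)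
    (hE0 : E 0 0 = 1)
    (hEb : ∀ (n : ℕ) (k : ℤ), (k < 0 ∨ (n : ℤ) < k) → E n k = 0)
    (hErec : ∀ (n : ℕ) (k : ℤ),
      E (n + 1) k =
        (a₁ * (k : ℝ) + a₂) * E n k +
        (a₁ * ((n : ℝ) + 1) - a₁ * (k : ℝ) + a₂) * E n (k - 1))
    (hS0 : S 0 0 = 1)
    (hSb : ∀ (n : ℕ) (k : ℤ), (k < 0 ∨ (n : ℤ) + 1 < 2 * k) → S n k = 0)
    (hSrec : ∀ (n : ℕ) (k : ℤ),
      S (n + 1) k =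
        (a₁ * (k : ℝ) + a₂) * S n k +
        c * ((n : ℝ) + 1 - 2 * (k : ℝ) + 1) * S n (k - 1)) :
    ∀ n : ℕ, 1 ≤ n →
      (∑ k ∈ Finset.range (n + 1), C (E n (k : ℤ)) * X ^ k) =
        ∑ k ∈ Finset.range (n / 2 + 1),
          C (S n (k : ℤ)) * C (2 * a₁ / c) ^ k * X ^ k * (1 + X) ^ (n - 2 * k) := by
  have hct : c * (2 * a₁ / c) = 2 * a₁ := mul_div_cancel₀ _ hc.ne'
  rintro n -
  induction n with
  | zero => simp [hE0, hS0]
  | succ n ih => rw [eulerianRow_succ a₁ a₂ E hEb hErec, ih, gammaRow_succ hSb hSrec hct]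

theorem generalized_eulerian_gamma_decomposition
    (a₁ a₂ c : ℝ) (ha₁ : 0 < a₁) (ha₂ : 0 < a₂) (hc : 0 < c)
    (E S : ℕ → ℤ → ℝ)
    (hE0 : E 0 0 = 1)
    (hEb : ∀ (n : ℕ) (k : ℤ), (k < 0 ∨ (n : ℤ) < k) → E n k = 0)
    (hErec : ∀ (n : ℕ) (k : ℤ),
      E (n + 1) k =
        (a₁ * (k : ℝ) + a₂) * E n k +
        (a₁ * ((n : ℝ) + 1) - a₁ * (k : ℝ) + a₂) * E n (k - 1))
    (hS0 : S 0 0 = 1)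
    (hSb : ∀ (n : ℕ) (k : ℤ), (k < 0 ∨ (n : ℤ) + 1 < 2 * k) → S n k = 0)
    (hSrec : ∀ (n : ℕ) (k : ℤ),
      S (n + 1) k =
        (a₁ * (k : ℝ) + a₂) * S n k +
        c * ((n : ℝ) + 1 - 2 * (k : ℝ) + 1) * S n (k - 1)) :
    ∀ n : ℕ, 1 ≤ n →
      (∑ k ∈ Finset.range (n + 1), C (E n (k : ℤ)) * X ^ k) =
        ∑ k ∈ Finset.range (n / 2 + 1),
          C (S n (k : ℤ)) * C (2 * a₁ / c) ^ k * X ^ k * (1 + X) ^ (n - 2 * k) :=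
  generalized_eulerian_gamma_decomposition_general a₁ a₂ c hc E S hE0 hEb hErec hS0 hSb hSrec
end

section
/- Let a, b, c > 0 and let S_{n,k} satisfy S_{n,k} = (a·k + b)S_{n-1,k} + c(n - 2k + 1)S_{n-1,k-1} with S_{0,0}=1 and S_{n,k}=0 unless 0 ≤ k ≤ (n+1)/2. Let Q_n(δ,t) be the general derivative polynomial with δ = 2b/a. Then for all n ≥ 0 and all q > 1 (with (2c/a)q - 1 > 0), the row-generating function satisfies S_n(q) = (a/2)^n·((2c/a)q - 1)^(n/2)·Q_n(2b/a, 1/√((2c/a)q - 1)). -/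
/-!
The row polynomials `R_n(q) = ∑ₖ S_{n,k} qᵏ` satisfy
`R_{n+1} = (b + c n q) R_n + (a - 2 c q) q R_n'`. Under the substitution `q = (a / 2c)(1 + y²)`
this becomes, up to the factor `a / 2`, the recurrence of the reflected polynomials
`yⁿ Q_n(1 / y)`, so `R_n((a / 2c)(1 + y²)) = (a / 2)ⁿ yⁿ Q_n(1 / y)`; the theorem is the case
`y = √((2c / a) q - 1)`.
-/

open Polynomial

/-- The general derivative polynomials `Q_n(δ, t)`:
`Q_0 = 1`, `Q_{n+1} = (1 + t²)·Q_n' + δ·t·Q_n`. -/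
noncomputable def Qpoly (δ : ℝ) : ℕ → ℝ[X]
  | 0 => 1
  | n + 1 => (1 + X ^ 2) * derivative (Qpoly δ n) + C δ * X * Qpoly δ n

section RowPolynomial

variable {R : Type*} [CommRing R]

noncomputable def rowPoly (S : ℕ → ℤ → R) (n : ℕ) : R[X] :=
  ∑ k ∈ Finset.range (n + 1), C (S n k) * X ^ k

theorem eval_rowPoly (S : ℕ → ℤ → R) (n : ℕ) (q : R) :
    (rowPoly S n).eval q = ∑ k ∈ Finset.range (n + 1), S n k * q ^ k := by
  simp [rowPoly, eval_finsetSum]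

theorem coeff_rowPoly {S : ℕ → ℤ → R} {n : ℕ} (hS : ∀ k : ℕ, n < k → S n k = 0)
    (k : ℕ) : (rowPoly S n).coeff k = S n k := by
  simp only [rowPoly, finsetSum_coeff, coeff_C_mul_X_pow, Finset.sum_ite_eq, Finset.mem_range]
  split_ifs with hk
  · rfl
  · exact (hS k (by omega)).symm

theorem rowPoly_zero {S : ℕ → ℤ → R} (hS0 : S 0 0 = 1) : rowPoly S 0 = 1 := by
  simp [rowPoly, hS0]

theorem rowPoly_succ {a b c : R} {S : ℕ → ℤ → R}
    (hSb : ∀ (n : ℕ) (k : ℤ), (k < 0 ∨ (n : ℤ) + 1 < 2 * k) → S n k = 0)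
    (hSrec : ∀ (n : ℕ) (k : ℤ),
      S (n + 1) k = (a * k + b) * S n k + c * (n + 1 - 2 * k + 1) * S n (k - 1)) (n : ℕ) :
    rowPoly S (n + 1) = (C b + C c * (n : R[X]) * X) * rowPoly S n
      + (C a - 2 * C c * X) * X * derivative (rowPoly S n) := by
  have hvanish : ∀ m k : ℕ, m < k → S m k = 0 := fun m k h => hSb m k (Or.inr (by omega))
  ext (_ | _ | k) <;>
    simp [coeff_rowPoly (hvanish _), hSrec, hSb n (-1) (Or.inl (by norm_num)), coeff_derivative,
      add_mul, sub_mul, mul_assoc] <;>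
    ring

end RowPolynomial

/-- The reflection `X ^ n * Q_n(1 / X)` of `Q_n`, given by its own recurrence. -/
noncomputable def QpolyReflect (δ : ℝ) : ℕ → ℝ[X]
  | 0 => 1
  | n + 1 => (C δ + (n : ℝ[X]) * (1 + X ^ 2)) * QpolyReflect δ n
      - X * (1 + X ^ 2) * derivative (QpolyReflect δ n)

theorem comp_eq_C_mul_QpolyReflect {a b c : ℝ} (ha : a ≠ 0) (hc : c ≠ 0) {p : ℕ → ℝ[X]}
    (h0 : p 0 = 1)
    (hsucc : ∀ n : ℕ,
      p (n + 1) = (C b + C c * (n : ℝ[X]) * X) * p n + (C a - 2 * C c * X) * X * derivative (p n))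
    (n : ℕ) :
    (p n).comp (C (a / (2 * c)) * (1 + X ^ 2)) = C ((a / 2) ^ n) * QpolyReflect (2 * b / a) n := by
  induction n with
  | zero => simp [h0, QpolyReflect]
  | succ n ih =>
    have hderiv := congrArg derivative ih
    simp only [derivative_comp, derivative_C_mul] at hderiv
    apply Polynomial.funext
    intro y
    have hval := congrArg (eval y) ih
    replace hderiv := congrArg (eval y) hderiv
    simp only [eval_comp, eval_mul, eval_C, eval_add, eval_one, eval_pow, eval_X, map_pow,
      derivative_one, derivative_X_pow_succ, Nat.cast_one, map_add, map_one, pow_one, zero_add]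
      at hval hderiv
    rw [hsucc, QpolyReflect]
    simp only [add_comp, mul_comp, sub_comp, C_comp, natCast_comp, X_comp, ofNat_comp, eval_add,
      eval_sub, eval_mul, eval_C, eval_natCast, eval_one, eval_pow, eval_X, eval_comp, map_pow]
    linear_combination (norm := skip)
      (b + n * a / 2 * (1 + y ^ 2)) * hval - a / 2 * y * (1 + y ^ 2) * hderiv
    field_simp
    ring

theorem eval_QpolyReflect (δ : ℝ) (n : ℕ) {y : ℝ} (hy : y ≠ 0) :
    (QpolyReflect δ n).eval y = y ^ n * (Qpoly δ n).eval y⁻¹ := by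
  induction n generalizing y with
  | zero => simp [QpolyReflect, Qpoly]
  | succ n ih =>
    have hderiv : (derivative (QpolyReflect δ n)).eval y
        = n * y ^ (n - 1) * (Qpoly δ n).eval y⁻¹
          + y ^ n * ((derivative (Qpoly δ n)).eval y⁻¹ * -(y ^ 2)⁻¹) := by
      refine (Polynomial.hasDerivAt _ y).unique
        (HasDerivAt.congr_of_eventuallyEq (f := fun z => z ^ n * (Qpoly δ n).eval z⁻¹) ?_ ?_)
      · exact (hasDerivAt_pow n y).mul
          (((Qpoly δ n).hasDerivAt y⁻¹).comp y (hasDerivAt_inv hy))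
      · filter_upwards [eventually_ne_nhds hy] with z hz using ih hz
    have hpow : (n : ℝ) * y ^ (n - 1) * y = n * y ^ n := by
      rcases n with _ | n
      · simp
      · rw [mul_assoc, pow_sub_one_mul n.succ_ne_zero]
    rw [QpolyReflect, Qpoly]
    simp only [eval_add, eval_sub, eval_mul, eval_pow, eval_X, eval_C, eval_one, eval_natCast,
      ih hy, hderiv]
    linear_combination (norm := skip) (-(1 + y ^ 2) * (Qpoly δ n).eval y⁻¹) * hpow
    field_simp
    ring

theorem row_generating_eq_general_derivative_polynomial_general
    (a b c : ℝ) (ha : 0 < a) (hc : 0 < c)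
    (S : ℕ → ℤ → ℝ)
    (hS0 : S 0 0 = 1)
    (hSb : ∀ (n : ℕ) (k : ℤ), (k < 0 ∨ (n : ℤ) + 1 < 2 * k) → S n k = 0)
    (hSrec : ∀ (n : ℕ) (k : ℤ),
      S (n + 1) k =
        (a * (k : ℝ) + b) * S n k +
        c * ((n : ℝ) + 1 - 2 * (k : ℝ) + 1) * S n (k - 1)) :
    ∀ n : ℕ, ∀ q : ℝ, 1 < q → 0 < (2 * c / a) * q - 1 →
      (∑ k ∈ Finset.range (n + 1), S n (k : ℤ) * q ^ k) =
        (a / 2) ^ n * Real.sqrt ((2 * c / a) * q - 1) ^ n *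
          (Qpoly (2 * b / a) n).eval (1 / Real.sqrt ((2 * c / a) * q - 1)) := by
  intro n q _ hu
  set y := Real.sqrt ((2 * c / a) * q - 1)
  have hy : y ≠ 0 := (Real.sqrt_pos.2 hu).ne'
  have hq : q = (C (a / (2 * c)) * (1 + X ^ 2)).eval y := by
    simp only [eval_mul, eval_C, eval_add, eval_one, eval_pow, eval_X, y, Real.sq_sqrt hu.le]
    field_simp
    ring
  rw [← eval_rowPoly, hq, ← eval_comp,
    comp_eq_C_mul_QpolyReflect ha.ne' hc.ne' (rowPoly_zero hS0) (rowPoly_succ hSb hSrec),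
    eval_C_mul, eval_QpolyReflect _ _ hy, one_div, mul_assoc]

theorem row_generating_eq_general_derivative_polynomial
    (a b c : ℝ) (ha : 0 < a) (hb : 0 < b) (hc : 0 < c)
    (S : ℕ → ℤ → ℝ)
    (hS0 : S 0 0 = 1)
    (hSb : ∀ (n : ℕ) (k : ℤ), (k < 0 ∨ (n : ℤ) + 1 < 2 * k) → S n k = 0)
    (hSrec : ∀ (n : ℕ) (k : ℤ),
      S (n + 1) k =
        (a * (k : ℝ) + b) * S n k +
        c * ((n : ℝ) + 1 - 2 * (k : ℝ) + 1) * S n (k - 1)) :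
    ∀ n : ℕ, ∀ q : ℝ, 1 < q → 0 < (2 * c / a) * q - 1 →
      (∑ k ∈ Finset.range (n + 1), S n (k : ℤ) * q ^ k) =
        (a / 2) ^ n * Real.sqrt ((2 * c / a) * q - 1) ^ n *
          (Qpoly (2 * b / a) n).eval (1 / Real.sqrt ((2 * c / a) * q - 1)) :=
  row_generating_eq_general_derivative_polynomial_general a b c ha hc S hS0 hSb hSrec
end

section
/- Let A_{n,k} satisfy A_{n,k} = (1+k)A_{n-1,k} + (2n-2k+1)A_{n-1,k-1} with A_{0,0}=1, A_{n,k}=0 unless 0 ≤ k ≤ n. Then for every n, the polynomial A_n(q) = Σ_k A_{n,k} q^k has only real zeros. -/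
/-!
The polynomials satisfy `A_{n+1}(q) = (1 + (2n+1)q) A_n(q) + q(1 - 2q) A_n'(q)`. By induction,
`A_n` is monic of degree `n` with simple negative roots `r_0 < ⋯ < r_{n-1}`. At a root,
`A_{n+1}(r_j) = r_j(1 - 2r_j) A_n'(r_j)` has the sign opposite to `A_n'(r_j)`, which alternates
with `j`; together with `A_{n+1}(0) = A_n(0) > 0` and the sign `(-1)^{n+1}` of `A_{n+1}` near
`-∞`, the intermediate value theorem puts one root of `A_{n+1}` in each of the `n + 1` gaps
of `-∞ < r_0 < ⋯ < r_{n-1} < 0`.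
-/

open Polynomial Finset Lagrange

theorem Polynomial.exists_mem_Ioo_isRoot_of_eval_mul_eval_neg {f : ℝ[X]} {a b : ℝ} (hab : a < b)
    (h : f.eval a * f.eval b < 0) : ∃ c ∈ Set.Ioo a b, f.IsRoot c := by
  have hf : ContinuousOn (fun x ↦ f.eval x) (Set.Icc a b) := f.continuousOn
  rcases mul_neg_iff.mp h with ⟨ha, hb⟩ | ⟨ha, hb⟩
  · exact intermediate_value_Ioo' hab.le hf ⟨hb, ha⟩
  · exact intermediate_value_Ioo hab.le hf ⟨ha, hb⟩

theorem Polynomial.exists_strictMonoOn_isRoot_of_eval_mul_eval_succ_neg {f : ℝ[X]} {s : ℕ → ℝ}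
    {m : ℕ} (hs : ∀ i < m, s i < s (i + 1)) (hf : ∀ i < m, f.eval (s i) * f.eval (s (i + 1)) < 0) :
    ∃ c : ℕ → ℝ, StrictMonoOn c (Set.Iio m) ∧ ∀ i < m, s 0 < c i ∧ c i < s m ∧ f.IsRoot (c i) := by
  choose! c hc hroot using fun i hi ↦
    exists_mem_Ioo_isRoot_of_eval_mul_eval_neg (hs i hi) (hf i hi)
  have hsmono : MonotoneOn s (Set.Iic m) :=
    (strictMonoOn_Iic_of_lt_succ fun i hi ↦ by simpa using hs i hi).monotoneOn
  have hle : ∀ {i j}, i ≤ j → j ≤ m → s i ≤ s j := fun hij hj ↦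
    hsmono (Set.mem_Iic.mpr (hij.trans hj)) (Set.mem_Iic.mpr hj) hij
  refine ⟨c, fun i hi j hj hij ↦ ?_, fun i hi ↦ ⟨?_, ?_, hroot i hi⟩⟩
  · exact (hc i hi).2.trans_le (hle hij (le_of_lt hj)) |>.trans (hc j hj).1
  · exact (hle (Nat.zero_le i) hi.le).trans_lt (hc i hi).1
  · exact (hc i hi).2.trans_le (hle hi le_rfl)

theorem Lagrange.eq_nodal_of_monic_of_isRoot {F ι : Type*} [Field F] {f : F[X]} {s : Finset ι}
    {v : ι → F} (hf : f.Monic) (hdeg : f.natDegree = #s) (hv : Set.InjOn v s)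
    (hroot : ∀ i ∈ s, f.IsRoot (v i)) : f = nodal s v := by
  refine eq_of_degree_sub_lt_of_eval_index_eq s hv ?_ fun i hi ↦ ?_
  · have hdeg' : f.degree = (nodal s v).degree := by
      rw [degree_nodal, degree_eq_natDegree hf.ne_zero, hdeg]
    calc (f - nodal s v).degree < f.degree :=
          degree_sub_lt_left hdeg' hf.ne_zero (by rw [hf.leadingCoeff, nodal_monic.leadingCoeff])
      _ = #s := by rw [degree_eq_natDegree hf.ne_zero, hdeg]
  · rw [(hroot i hi).eq_zero, eval_nodal_at_node hi]

theorem Polynomial.Monic.exists_lt_neg_one_pow_mul_eval_pos {f : ℝ[X]} (hf : f.Monic)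
    (hdeg : 0 < f.natDegree) (b : ℝ) : ∃ x < b, 0 < (-1) ^ f.natDegree * f.eval x := by
  set g : ℝ[X] := (-1) ^ f.natDegree * f.comp (-X)
  have hg : g.Monic := hf.neg_one_pow_natDegree_mul_comp_neg_X
  have hgdeg : 0 < g.degree := by
    have : g.degree = f.degree := by simp [g]
    rwa [this, degree_eq_natDegree hf.ne_zero, Nat.cast_pos]
  have hev := (g.tendsto_atTop_of_leadingCoeff_nonneg hgdeg
    (by rw [hg.leadingCoeff]; exact zero_le_one)).eventually_gt_atTop 0
  obtain ⟨x, hx, hxb⟩ := (hev.and (Filter.eventually_gt_atTop (-b))).exists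
  exact ⟨-x, by linarith, by simpa [g] using hx⟩

theorem mul_neg_of_neg_one_pow_mul_pos {R : Type*} [CommRing R] [LinearOrder R]
    [IsStrictOrderedRing R] {x y : R} {k : ℕ} (hx : 0 < (-1) ^ (k + 1) * x)
    (hy : 0 < (-1) ^ k * y) : x * y < 0 := by
  have hsq : ((-1 : R) ^ k) * (-1) ^ k = 1 := by rw [← mul_pow]; norm_num
  have := mul_pos hx hy
  rw [pow_succ] at this
  nlinarith

theorem Lagrange.neg_one_pow_mul_eval_nodal_erase_pos {R : Type*} [CommRing R] [LinearOrder R]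
    [IsStrictOrderedRing R] {r : ℕ → R} {n j : ℕ} (hr : StrictMonoOn r (Set.Iio n)) (hj : j < n) :
    0 < (-1) ^ (n - 1 - j) * eval (r j) (nodal ((range n).erase j) r) := by
  induction n with
  | zero => omega
  | succ n ih =>
    rcases (Nat.lt_succ_iff.mp hj).lt_or_eq with hjn | rfl
    · have hrn : r j < r n := hr (by simp; omega) (by simp) hjn
      have ih := ih (hr.mono fun i hi ↦ by simp at hi ⊢; omega) hjn
      rw [range_add_one, erase_insert_of_ne hjn.ne', nodal_insert_eq_nodal (by simp),
        eval_mul, show n + 1 - 1 - j = n - 1 - j + 1 by omega, pow_succ]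
      simp only [eval_sub, eval_X, eval_C]
      nlinarith [mul_pos ih (sub_pos.mpr hrn)]
    · rw [range_add_one, erase_insert notMem_range_self, Nat.add_sub_cancel, Nat.sub_self,
        pow_zero, one_mul, eval_nodal]
      exact prod_pos fun i hi ↦
        sub_pos.mpr (hr (by simp at hi ⊢; omega) (by simp) (by simpa using hi))

theorem Lagrange.neg_one_pow_mul_eval_derivative_nodal_pos {R : Type*} [CommRing R] [LinearOrder R]
    [IsStrictOrderedRing R] {r : ℕ → R} {n j : ℕ} (hr : StrictMonoOn r (Set.Iio n)) (hj : j < n) :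
    0 < (-1) ^ (n - 1 - j) * eval (r j) (derivative (nodal (range n) r)) := by
  rw [eval_nodal_derivative_eval_node_eq (mem_range.mpr hj)]
  exact neg_one_pow_mul_eval_nodal_erase_pos hr hj

def HasDistinctNegRoots (P : ℝ[X]) (n : ℕ) : Prop :=
  ∃ r : ℕ → ℝ, StrictMonoOn r (Set.Iio n) ∧ (∀ i < n, r i < 0) ∧ P = nodal (range n) r

theorem hasDistinctNegRoots_of_sign_alternation {Q : ℝ[X]} {n : ℕ} {r : ℕ → ℝ} (hQ : Q.Monic)
    (hQdeg : Q.natDegree = n + 1) (hr : StrictMonoOn r (Set.Iio n)) (hneg : ∀ i < n, r i < 0)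
    (hnode : ∀ j < n, 0 < (-1) ^ (n - j) * Q.eval (r j)) (hzero : 0 < Q.eval 0) :
    HasDistinctNegRoots Q (n + 1) := by
  obtain ⟨x₀, hx₀, hQx₀⟩ := hQ.exists_lt_neg_one_pow_mul_eval_pos (by omega) (min (r 0) 0)
  rw [hQdeg] at hQx₀
  -- the sample points `x₀ < r 0 < ⋯ < r (n - 1) < 0`
  set s : ℕ → ℝ := fun i ↦ if i = 0 then x₀ else if i ≤ n then r (i - 1) else 0
  have hs : ∀ i < n + 1, s i < s (i + 1) := by
    intro i hi
    rcases Nat.eq_zero_or_pos i with rfl | hi0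
    · rcases Nat.eq_zero_or_pos n with rfl | hn
      · simpa [s] using hx₀.trans_le (min_le_right _ _)
      · simpa [s, Nat.one_le_iff_ne_zero.mpr hn.ne'] using hx₀.trans_le (min_le_left _ _)
    · by_cases hin : i + 1 ≤ n
      · simpa [s, hi0.ne', hin, (Nat.le_succ i).trans hin] using
          hr (by simp; omega) (by simp; omega) (show i - 1 < i by omega)
      · simpa [s, hi0.ne', hin, show i ≤ n by omega] using hneg (i - 1) (by omega)
  have hsign : ∀ i ≤ n + 1, 0 < (-1) ^ (n + 1 - i) * Q.eval (s i) := by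
    intro i hi
    rcases Nat.eq_zero_or_pos i with rfl | hi0
    · simpa [s] using hQx₀
    · by_cases hin : i ≤ n
      · simpa [s, hi0.ne', hin, show n + 1 - i = n - (i - 1) by omega] using
          hnode (i - 1) (by omega)
      · simpa [s, hi0.ne', hin, show i = n + 1 by omega] using hzero
  obtain ⟨q, hq, hqroot⟩ := exists_strictMonoOn_isRoot_of_eval_mul_eval_succ_neg hs fun i hi ↦
    mul_neg_of_neg_one_pow_mul_pos (k := n - i)
      (by simpa [show n + 1 - i = n - i + 1 by omega] using hsign i hi.le)
      (by simpa [show n + 1 - (i + 1) = n - i by omega] using hsign (i + 1) hi)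
  refine ⟨q, hq, fun i hi ↦ (hqroot i hi).2.1.trans_eq (by simp [s]), ?_⟩
  exact eq_nodal_of_monic_of_isRoot hQ (by simp [hQdeg]) (hq.injOn.mono (by simp))
    fun i hi ↦ (hqroot i (mem_range.mp hi)).2.2

theorem HasDistinctNegRoots.of_eq_mul_add_mul_derivative {P Q : ℝ[X]} {n : ℕ} {a b c d : ℝ}
    (hP : HasDistinctNegRoots P n) (hQ : Q.Monic) (hQdeg : Q.natDegree = n + 1)
    (hb : 0 < b) (hc : c ≤ 0) (hd : 0 < d)
    (hQP : Q = (C a * X + C b) * P + X * (C c * X + C d) * derivative P) :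
    HasDistinctNegRoots Q (n + 1) := by
  obtain ⟨r, hr, hneg, rfl⟩ := hP
  have hQeval : ∀ x, Q.eval x = (a * x + b) * (nodal (range n) r).eval x
      + x * (c * x + d) * (derivative (nodal (range n) r)).eval x := fun x ↦ by simp [hQP]
  refine hasDistinctNegRoots_of_sign_alternation hQ hQdeg hr hneg (fun j hj ↦ ?_) ?_
  · -- `Q (r j) = r j (c r j + d) P' (r j)`, and the weight `r j (c r j + d)` is negative
    have hderiv := neg_one_pow_mul_eval_derivative_nodal_pos hr hj
    have hweight : 0 < -(r j * (c * r j + d)) :=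
      neg_pos.mpr (mul_neg_of_neg_of_pos (hneg j hj) (by nlinarith [hneg j hj]))
    rw [hQeval, eval_nodal_at_node (mem_range.mpr hj), show n - j = n - 1 - j + 1 by omega,
      pow_succ]
    nlinarith [mul_pos hderiv hweight]
  · rw [hQeval, eval_nodal]
    simpa using mul_pos hb (prod_pos fun i hi ↦ neg_pos.mpr (hneg i (mem_range.mp hi)))

noncomputable def flowerPoly (A : ℕ → ℤ → ℝ) (n : ℕ) : ℝ[X] :=
  ∑ k ∈ range (n + 1), C (A n k) * X ^ k

theorem natDegree_flowerPoly_le (A : ℕ → ℤ → ℝ) (n : ℕ) : (flowerPoly A n).natDegree ≤ n :=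
  natDegree_sum_le_of_forall_le _ _ fun _ hk ↦
    (natDegree_C_mul_X_pow_le _ _).trans (Nat.lt_succ_iff.mp (mem_range.mp hk))

section FlowerTriangle

variable {A : ℕ → ℤ → ℝ} (hAb : ∀ (n : ℕ) (k : ℤ), (k < 0 ∨ (n : ℤ) < k) → A n k = 0)
  (hArec : ∀ (n : ℕ) (k : ℤ),
    A (n + 1) k = (1 + (k : ℝ)) * A n k + (2 * ((n : ℝ) + 1) - 2 * (k : ℝ) + 1) * A n (k - 1))
include hAb

theorem coeff_flowerPoly (n m : ℕ) : (flowerPoly A n).coeff m = A n m := by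
  rw [flowerPoly, finsetSum_coeff]
  simp only [coeff_C_mul, coeff_X_pow, mul_ite, mul_one, mul_zero, sum_ite_eq, mem_range]
  split_ifs with hm
  · rfl
  · exact (hAb n m (Or.inr (by omega))).symm

include hArec

theorem flowerPoly_succ (n : ℕ) :
    flowerPoly A (n + 1) = (C (2 * n + 1 : ℝ) * X + C 1) * flowerPoly A n
      + X * (C (-2) * X + C 1) * derivative (flowerPoly A n) := by
  ext m
  rcases m with _ | _ | m <;>
    simp [coeff_flowerPoly hAb, coeff_derivative, coeff_X_mul, mul_add, add_mul, mul_assoc,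
      hArec n, hAb n (-1)] <;>
    ring

variable (hA0 : A 0 0 = 1)
include hA0

theorem flowerTriangle_diag (n : ℕ) : A n n = 1 := by
  induction n with
  | zero => exact_mod_cast hA0
  | succ n ih =>
    rw [Nat.cast_succ, hArec, add_sub_cancel_right, ih, hAb n (n + 1) (Or.inr (lt_add_one _))]
    push_cast
    ring

theorem flowerPoly_monic (n : ℕ) : (flowerPoly A n).Monic :=
  monic_of_natDegree_le_of_coeff_eq_one n (natDegree_flowerPoly_le A n)
    (by rw [coeff_flowerPoly hAb, flowerTriangle_diag hAb hArec hA0])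

theorem natDegree_flowerPoly (n : ℕ) : (flowerPoly A n).natDegree = n :=
  natDegree_eq_of_le_of_coeff_ne_zero (natDegree_flowerPoly_le A n)
    (by rw [coeff_flowerPoly hAb, flowerTriangle_diag hAb hArec hA0]; exact one_ne_zero)

theorem hasDistinctNegRoots_flowerPoly (n : ℕ) : HasDistinctNegRoots (flowerPoly A n) n := by
  induction n with
  | zero => exact ⟨fun _ ↦ 0, by simp [StrictMonoOn], by simp, by simp [flowerPoly, hA0]⟩
  | succ n ih =>
    exact ih.of_eq_mul_add_mul_derivative (flowerPoly_monic hAb hArec hA0 _)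
      (natDegree_flowerPoly hAb hArec hA0 _) one_pos (by norm_num) one_pos
      (flowerPoly_succ hAb hArec n)

end FlowerTriangle

theorem flower_triangle_real_rooted
    (A : ℕ → ℤ → ℝ)
    (hA0 : A 0 0 = 1)
    (hAb : ∀ (n : ℕ) (k : ℤ), (k < 0 ∨ (n : ℤ) < k) → A n k = 0)
    (hArec : ∀ (n : ℕ) (k : ℤ),
      A (n + 1) k =
        (1 + (k : ℝ)) * A n k + (2 * ((n : ℝ) + 1) - 2 * (k : ℝ) + 1) * A n (k - 1)) :
    ∀ n : ℕ, ∀ z : ℂ,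
      (Polynomial.aeval z) (∑ k ∈ Finset.range (n + 1), C (A n (k : ℤ)) * X ^ k) = 0 →
        z.im = 0 := by
  intro n z hz
  obtain ⟨r, -, -, hr⟩ := hasDistinctNegRoots_flowerPoly hAb hArec hA0 n
  change aeval z (flowerPoly A n) = 0 at hz
  rw [hr, nodal_eq, map_prod] at hz
  obtain ⟨i, -, hi⟩ := prod_eq_zero_iff.mp hz
  rw [map_sub, aeval_X, aeval_C, sub_eq_zero] at hi
  rw [hi, Complex.coe_algebraMap, Complex.ofReal_im]
end

section
/- The staircase-tableau numbers satisfy the explicit formula T_{n,m} = Σ_{k,i,j ≥ 0} C(n-k, m-k)·C(n-i, k-i)·C(1/2 + i, i)·C(i,j)·(-2)^k·(-1)^j·(1+j)^n for all n, m ≥ 0, where C(1/2+i, i) is the generalized binomial coefficient. -/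
/-!
The numbers `T n k` are determined by their recurrence and boundary values, so it suffices to
exhibit one solution. Put `B n i = ∑ j, C(i, j) (-1)^j (1 + j)^n`, which satisfies
`B (n+1) i = (i+1) B n i - i B n (i-1)` and vanishes for `i > n`, and `w i = 2^i C(1/2 + i, i)`,
so that `(i+1) w (i+1) = (2i+3) w i`. Then `(-1)^k ∑ i, C(n-i, k-i) w i B n i` satisfies the
recurrence term by term, by Pascal's rule and absorption for `C(n-i, ·)`. In the triple sum,
summing out `k` with `∑ s, C(N-s, M-s) C(N, s) x^s = C(N, M) (1+x)^M` at `x = -2` leaves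
exactly this array.
-/

open Finset

/-- Extended by zero to negative `t`, so that Pascal's rule and absorption hold for every integer
`t` and the recurrence can be checked without boundary cases. -/
def intChoose (a : ℕ) : ℤ → ℕ
  | (t : ℕ) => a.choose t
  | Int.negSucc _ => 0

@[simp]
lemma intChoose_natCast (a t : ℕ) : intChoose a t = a.choose t := rfl

@[simp]
lemma intChoose_zero (a : ℕ) : intChoose a 0 = 1 := Nat.choose_zero_right a

lemma intChoose_of_neg (a : ℕ) {t : ℤ} (ht : t < 0) : intChoose a t = 0 := by
  obtain ⟨s, rfl⟩ := Int.exists_eq_neg_ofNat ht.le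
  cases s with
  | zero => simp at ht
  | succ s => rfl

lemma intChoose_of_lt {a : ℕ} {t : ℤ} (ht : (a : ℤ) < t) : intChoose a t = 0 := by
  lift t to ℕ using by omega
  exact Nat.choose_eq_zero_of_lt (by omega)

lemma intChoose_succ_add_one (a : ℕ) (t : ℤ) :
    intChoose (a + 1) (t + 1) = intChoose a t + intChoose a (t + 1) := by
  obtain ht | rfl | ht := lt_trichotomy t (-1)
  · simp [intChoose_of_neg, show t + 1 < 0 by omega, ht.trans (by norm_num : (-1 : ℤ) < 0)]
  · simp [intChoose_of_neg]
  · lift t to ℕ using by omega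
    rw [← Nat.cast_succ, intChoose_natCast, intChoose_natCast, intChoose_natCast]
    exact Nat.choose_succ_succ' a t

lemma add_one_mul_intChoose_add_one (a : ℕ) (t : ℤ) :
    (t + 1) * (intChoose a (t + 1) : ℤ) = (a - t) * intChoose a t := by
  obtain ht | rfl | ht := lt_trichotomy t (-1)
  · simp [intChoose_of_neg, show t + 1 < 0 by omega, ht.trans (by norm_num : (-1 : ℤ) < 0)]
  · simp [intChoose_of_neg]
  · lift t to ℕ using by omega
    rw [← Nat.cast_succ, intChoose_natCast, intChoose_natCast]
    obtain hta | hat := le_or_gt t a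
    · have h := Nat.choose_succ_right_eq a t
      zify [hta] at h
      push_cast
      linarith
    · simp [Nat.choose_eq_zero_of_lt, hat, hat.trans (Nat.lt_succ_self t)]

lemma add_one_mul_genChoose_add_one (x : ℝ) (i : ℕ) :
    (i + 1) * genChoose (x + 1) (i + 1) = (x + 1) * genChoose x i := by
  simp only [genChoose, prod_range_succ', Nat.factorial_succ]
  push_cast
  have : (i.factorial : ℝ) ≠ 0 := by positivity
  field_simp
  ring_nf

noncomputable def altBinomPowSum (n i : ℕ) : ℝ :=
  ∑ j ∈ range (i + 1), (i.choose j : ℝ) * (-1) ^ j * (1 + j) ^ n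

lemma altBinomPowSum_zero_right (n : ℕ) : altBinomPowSum n 0 = 1 := by
  simp [altBinomPowSum]

lemma altBinomPowSum_zero_left {i : ℕ} (hi : i ≠ 0) : altBinomPowSum 0 i = 0 := by
  simpa [altBinomPowSum, mul_comm, hi] using
    congrArg (Int.cast : ℤ → ℝ) (Int.alternating_sum_range_choose (n := i))

lemma altBinomPowSum_succ_succ (n i : ℕ) :
    altBinomPowSum (n + 1) (i + 1) =
      (i + 2) * altBinomPowSum n (i + 1) - (i + 1) * altBinomPowSum n i := by
  have hi : altBinomPowSum n i =
      ∑ j ∈ range (i + 2), (i.choose j : ℝ) * (-1) ^ j * (1 + j) ^ n := by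
    rw [altBinomPowSum, sum_range_succ _ (i + 1), Nat.choose_succ_self]
    simp
  rw [hi, altBinomPowSum, altBinomPowSum, mul_sum, mul_sum, ← sum_sub_distrib]
  refine sum_congr rfl fun j hj => ?_
  have hpascal := Nat.choose_mul_succ_eq i j
  rify [Nat.le_of_lt_succ (mem_range.mp hj)] at hpascal
  linear_combination (-1 : ℝ) ^ j * (1 + j) ^ n * hpascal

lemma altBinomPowSum_succ (n i : ℕ) :
    altBinomPowSum (n + 1) i = (i + 1) * altBinomPowSum n i - i * altBinomPowSum n (i - 1) := by
  cases i with
  | zero => simp [altBinomPowSum_zero_right]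
  | succ i =>
    rw [altBinomPowSum_succ_succ]
    push_cast
    ring_nf

lemma altBinomPowSum_eq_zero_of_lt {n i : ℕ} (h : n < i) : altBinomPowSum n i = 0 := by
  induction n generalizing i with
  | zero => exact altBinomPowSum_zero_left (by omega)
  | succ n ih =>
    obtain ⟨i, rfl⟩ := Nat.exists_eq_add_one_of_ne_zero (by omega : i ≠ 0)
    rw [altBinomPowSum_succ_succ, ih (by omega), ih (by omega)]
    ring

noncomputable def staircaseWeight (i : ℕ) : ℝ := 2 ^ i * genChoose (1 / 2 + i) i

lemma add_one_mul_staircaseWeight_add_one (i : ℕ) :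
    (i + 1) * staircaseWeight (i + 1) = (2 * i + 3) * staircaseWeight i := by
  have h := add_one_mul_genChoose_add_one (1 / 2 + i) i
  rw [staircaseWeight, staircaseWeight, Nat.cast_succ, ← add_assoc]
  linear_combination 2 ^ (i + 1) * h

noncomputable def staircaseSum (n : ℕ) (k : ℤ) : ℝ :=
  ∑ i ∈ range (n + 1),
    (intChoose (n - i) (k - i) : ℝ) * staircaseWeight i * altBinomPowSum n i

lemma intChoose_staircase_identity (a i : ℕ) (k : ℤ) :
    (i + 1) * (intChoose (a + 1) (k - i) : ℤ) - (2 * i + 3) * intChoose a (k - 1 - i) =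
      (k + 1) * intChoose a (k - i) - (i + a + 2) * intChoose a (k - 1 - i) +
        (i + a - k + 2) * intChoose a (k - 2 - i) := by
  have hpascal := intChoose_succ_add_one a (k - 1 - i)
  have habs₁ := add_one_mul_intChoose_add_one a (k - 1 - i)
  have habs₂ := add_one_mul_intChoose_add_one a (k - 2 - i)
  rw [show k - 1 - i + 1 = k - i by ring] at hpascal habs₁
  rw [show k - 2 - i + 1 = k - 1 - i by ring] at habs₂
  rw [hpascal]
  push_cast
  linear_combination habs₂ - habs₁

lemma staircaseSum_succ_eq_sum (n : ℕ) (k : ℤ) :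
    staircaseSum (n + 1) k = ∑ i ∈ range (n + 1),
      ((i + 1) * (intChoose (n - i + 1) (k - i) : ℝ) -
        (2 * i + 3) * intChoose (n - i) (k - 1 - i)) * staircaseWeight i * altBinomPowSum n i := by
  have hlast : ∑ i ∈ range (n + 2),
      (intChoose (n + 1 - i) (k - i) : ℝ) * staircaseWeight i * ((i + 1) * altBinomPowSum n i) =
        ∑ i ∈ range (n + 1), (intChoose (n - i + 1) (k - i) : ℝ) * staircaseWeight i *
          ((i + 1) * altBinomPowSum n i) := by
    rw [sum_range_succ, altBinomPowSum_eq_zero_of_lt n.lt_succ_self]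
    simp only [mul_zero, add_zero]
    refine sum_congr rfl fun i hi => ?_
    rw [Nat.sub_add_comm (Nat.le_of_lt_succ (mem_range.mp hi))]
  have hshift : ∑ i ∈ range (n + 2),
      (intChoose (n + 1 - i) (k - i) : ℝ) * staircaseWeight i * (i * altBinomPowSum n (i - 1)) =
        ∑ i ∈ range (n + 1), (intChoose (n - i) (k - 1 - i) : ℝ) *
          ((2 * i + 3) * staircaseWeight i) * altBinomPowSum n i := by
    rw [sum_range_succ']
    simp only [Nat.cast_zero, zero_mul, mul_zero, add_zero]
    refine sum_congr rfl fun i _ => ?_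
    rw [← add_one_mul_staircaseWeight_add_one, Nat.add_sub_add_right, Nat.add_sub_cancel,
      Nat.cast_succ, sub_add_eq_sub_sub_swap]
    push_cast
    ring
  simp only [staircaseSum, altBinomPowSum_succ, mul_sub, sum_sub_distrib]
  rw [hlast, hshift, ← sum_sub_distrib]
  exact sum_congr rfl fun i _ => by ring

lemma staircaseSum_succ (n : ℕ) (k : ℤ) :
    staircaseSum (n + 1) k = (k + 1) * staircaseSum n k - (n + 2) * staircaseSum n (k - 1) +
      (n - k + 2) * staircaseSum n (k - 2) := by
  rw [staircaseSum_succ_eq_sum]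
  simp only [staircaseSum, mul_sum, ← sum_add_distrib, ← sum_sub_distrib]
  refine sum_congr rfl fun i hi => ?_
  obtain ⟨a, rfl⟩ := Nat.exists_eq_add_of_le (Nat.le_of_lt_succ (mem_range.mp hi))
  have h := congrArg (Int.cast : ℤ → ℝ) (intChoose_staircase_identity a i k)
  push_cast at h
  rw [Nat.add_sub_cancel_left]
  push_cast
  linear_combination staircaseWeight i * altBinomPowSum (i + a) i * h

noncomputable def staircaseClosedForm (n : ℕ) (k : ℤ) : ℝ := (-1) ^ k * staircaseSum n k

structure IsStaircaseArray (T : ℕ → ℤ → ℝ) : Prop where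
  zero_zero : T 0 0 = 1
  eq_zero_of_lt_or_lt : ∀ (n : ℕ) (k : ℤ), (k < 0 ∨ (n : ℤ) < k) → T n k = 0
  succ : ∀ (n : ℕ) (k : ℤ), T (n + 1) k =
    ((k : ℝ) + 1) * T n k + ((n : ℝ) + 1 + 1) * T n (k - 1) +
      ((n : ℝ) + 1 - (k : ℝ) + 1) * T n (k - 2)

theorem IsStaircaseArray.unique {T U : ℕ → ℤ → ℝ} (hT : IsStaircaseArray T)
    (hU : IsStaircaseArray U) : T = U := by
  funext n k
  induction n generalizing k with
  | zero =>
    obtain rfl | hk := eq_or_ne k 0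
    · rw [hT.zero_zero, hU.zero_zero]
    · have hk' : k < 0 ∨ ((0 : ℕ) : ℤ) < k := by omega
      rw [hT.eq_zero_of_lt_or_lt 0 k hk', hU.eq_zero_of_lt_or_lt 0 k hk']
  | succ n ih => rw [hT.succ, hU.succ, ih, ih, ih]

theorem isStaircaseArray_staircaseClosedForm : IsStaircaseArray staircaseClosedForm where
  zero_zero := by
    simp [staircaseClosedForm, staircaseSum, staircaseWeight, genChoose, altBinomPowSum_zero_right]
  eq_zero_of_lt_or_lt n k hk := by
    refine mul_eq_zero_of_right _ (sum_eq_zero fun i hi => ?_)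
    have hin := mem_range.mp hi
    rcases hk with hk | hk
    · rw [intChoose_of_neg _ (by omega)]
      simp
    · rw [intChoose_of_lt (by omega)]
      simp
  succ n k := by
    have hsign₁ : (-1 : ℝ) ^ (k - 1) = -(-1) ^ k := by
      rw [zpow_sub_one₀ (by norm_num), inv_neg_one, mul_neg_one]
    have hsign₂ : (-1 : ℝ) ^ (k - 2) = (-1) ^ k := by
      rw [zpow_sub₀ (by norm_num)]
      norm_num
    simp only [staircaseClosedForm, staircaseSum_succ, hsign₁, hsign₂]
    ring

theorem sum_range_choose_sub_mul_choose_mul_pow {R : Type*} [CommRing R] (N M : ℕ) (x : R) :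
    ∑ s ∈ range (M + 1), ((N - s).choose (M - s) : R) * N.choose s * x ^ s =
      N.choose M * (x + 1) ^ M := by
  rw [add_pow, mul_sum]
  refine sum_congr rfl fun s hs => ?_
  have h := congrArg (Nat.cast : ℕ → R)
    (Nat.choose_mul (n := N) (Nat.le_of_lt_succ (mem_range.mp hs)))
  push_cast at h
  linear_combination -x ^ s * h

lemma staircaseSum_natCast (n m : ℕ) :
    staircaseSum n m =
      ∑ i ∈ range (m + 1),
        ((n - i).choose (m - i) : ℝ) * staircaseWeight i * altBinomPowSum n i := by
  set f : ℕ → ℝ := fun i => intChoose (n - i) (m - i) * staircaseWeight i * altBinomPowSum n i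
  have hf : ∀ i, (m < i ∨ n < i) → f i = 0 := by
    rintro i (hi | hi)
    · simp [f, intChoose_of_neg _ (show (m : ℤ) - i < 0 by omega)]
    · simp [f, altBinomPowSum_eq_zero_of_lt hi]
  have hm : ∑ i ∈ range (m + 1), ((n - i).choose (m - i) : ℝ) * staircaseWeight i *
      altBinomPowSum n i = ∑ i ∈ range (m + 1), f i := by
    refine sum_congr rfl fun i hi => ?_
    have him := Nat.le_of_lt_succ (mem_range.mp hi)
    simp only [f]
    rw [show (m : ℤ) - i = ((m - i : ℕ) : ℤ) by omega, intChoose_natCast]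
  rw [hm, staircaseSum]
  rcases le_total m n with h | h
  · exact (sum_subset (range_subset_range.mpr (by omega))
      fun i _ hi => hf i (by simp at hi; omega)).symm
  · exact sum_subset (range_subset_range.mpr (by omega))
      fun i _ hi => hf i (by simp at hi; omega)

lemma tripleSum_eq_neg_one_pow_mul (n m : ℕ) :
    ∑ k ∈ range (m + 1), ∑ i ∈ range (k + 1), ∑ j ∈ range (i + 1),
        ((n - k).choose (m - k) : ℝ) * ((n - i).choose (k - i) : ℝ) *
          genChoose (1 / 2 + (i : ℝ)) i * (i.choose j : ℝ) *
          (-2 : ℝ) ^ k * (-1 : ℝ) ^ j * (1 + (j : ℝ)) ^ n =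
      (-1) ^ m * ∑ i ∈ range (m + 1),
        ((n - i).choose (m - i) : ℝ) * staircaseWeight i * altBinomPowSum n i := by
  set g : ℕ → ℕ → ℝ := fun k i =>
    ((n - k).choose (m - k) : ℝ) * ((n - i).choose (k - i) : ℝ) *
    (-2) ^ k * (genChoose (1 / 2 + i) i * altBinomPowSum n i)
  calc _ = ∑ k ∈ range (m + 1), ∑ i ∈ range (k + 1), g k i := by
        refine sum_congr rfl fun k _ => sum_congr rfl fun i _ => ?_
        simp only [g, altBinomPowSum, mul_sum]
        exact sum_congr rfl fun j _ => by ring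
    _ = ∑ i ∈ range (m + 1), ∑ k ∈ Ico i (m + 1), g k i := by
        simp only [range_eq_Ico]
        exact (sum_Ico_Ico_comm 0 (m + 1) fun i k => g k i).symm
    _ = ∑ i ∈ range (m + 1), (-2) ^ i * genChoose (1 / 2 + i) i * altBinomPowSum n i *
          ∑ s ∈ range (m - i + 1),
            ((n - i - s).choose (m - i - s) : ℝ) * (n - i).choose s * (-2) ^ s := by
        refine sum_congr rfl fun i hi => ?_
        have him := mem_range.mp hi
        rw [sum_Ico_eq_sum_range, show m + 1 - i = m - i + 1 by omega, mul_sum]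
        refine sum_congr rfl fun s _ => ?_
        simp only [g, Nat.sub_add_eq, Nat.add_sub_cancel_left, pow_add]
        ring
    _ = _ := by
        rw [mul_sum]
        refine sum_congr rfl fun i hi => ?_
        have hsign : (-2 : ℝ) ^ i * (-1) ^ (m - i) = (-1) ^ m * 2 ^ i := by
          rw [neg_eq_neg_one_mul (2 : ℝ), mul_pow, mul_right_comm, ← pow_add,
            Nat.add_sub_cancel' (Nat.le_of_lt_succ (mem_range.mp hi))]
        rw [sum_range_choose_sub_mul_choose_mul_pow, staircaseWeight,
          show (-2 : ℝ) + 1 = -1 by norm_num]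
        linear_combination ((n - i).choose (m - i) : ℝ) * genChoose (1 / 2 + i) i *
          altBinomPowSum n i * hsign

theorem staircase_tableaux_explicit_formula
    (T : ℕ → ℤ → ℝ)
    (hT0 : T 0 0 = 1)
    (hTb : ∀ (n : ℕ) (k : ℤ), (k < 0 ∨ (n : ℤ) < k) → T n k = 0)
    (hTrec : ∀ (n : ℕ) (k : ℤ),
      T (n + 1) k =
        ((k : ℝ) + 1) * T n k + ((n : ℝ) + 1 + 1) * T n (k - 1) +
          ((n : ℝ) + 1 - (k : ℝ) + 1) * T n (k - 2)) :
    ∀ n m : ℕ, T n (m : ℤ) =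
      ∑ k ∈ Finset.range (m + 1), ∑ i ∈ Finset.range (k + 1), ∑ j ∈ Finset.range (i + 1),
        ((n - k).choose (m - k) : ℝ) * ((n - i).choose (k - i) : ℝ) *
          genChoose (1 / 2 + (i : ℝ)) i * (i.choose j : ℝ) *
          (-2 : ℝ) ^ k * (-1 : ℝ) ^ j * (1 + (j : ℝ)) ^ n := by
  intro n m
  have hT : T = staircaseClosedForm :=
    IsStaircaseArray.unique ⟨hT0, hTb, hTrec⟩ isStaircaseArray_staircaseClosedForm
  rw [hT, staircaseClosedForm, staircaseSum_natCast, zpow_natCast, tripleSum_eq_neg_one_pow_mul]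
end

section
/- Let a_1 > 0, a_2 ≥ 0, and define D_{n,k} by D_{n,k} = (a_1 k + a_2)D_{n-1,k} + (b_1 n - b_1 k + b_2)D_{n-1,k-1} with D_{0,0}=1 and D_{n,k}=0 unless 0 ≤ k ≤ n, where b_1 > 0, b_2 ≥ 0. Let F_{n,k} satisfy F_{n,k} = (a_1 k + a_2)F_{n-1,k} + (b_1 k + b_2 - b_1 + (a_2/a_1)b_1)F_{n-1,k-1} with F_{0,0}=1. Then for all n, k ≥ 0, D_{n,k} = Σ_{i≥0} F_{n,i}·C(n-i, k-i)·(-b_1/a_1)^(k-i). -/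
/-!
Write `c = -b₁/a₁` and let `G n k` be the right-hand side. It suffices to show that `G` has the
initial values of `D` and satisfies the same recurrence. Expanding `G (n+1) (m+1)` by the
recurrence of `F` and collecting the coefficient of each `F n j`, the recurrence reduces to an
identity between binomial coefficients which follows from Pascal's rule,
`(K+1) C(N, K+1) = (N-K) C(N, K)` and `a₁ c = -b₁`.
-/

open Finset

theorem Nat.cast_sub_mul_choose {R : Type*} [CommRing R] (N K : ℕ) :
    ((N : R) - K) * N.choose K = (K + 1) * N.choose (K + 1) := by
  rcases le_or_gt K N with hKN | hNK
  · have h := congrArg (Nat.cast : ℕ → R) (Nat.choose_succ_right_eq N K)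
    push_cast [hKN] at h
    linear_combination -h
  · simp [Nat.choose_eq_zero_of_lt hNK, Nat.choose_eq_zero_of_lt (Nat.lt_succ_of_lt hNK)]

section Frobenius

variable {a₁ a₂ b₁ b₂ : ℝ}

def frobeniusSum (F : ℕ → ℤ → ℝ) (c : ℝ) (n k : ℕ) : ℝ :=
  ∑ i ∈ range (k + 1), F n i * ((n - i).choose (k - i) : ℝ) * c ^ (k - i)

theorem frobenius_coeff_identity (ha₁ : a₁ ≠ 0) {j m n : ℕ} (hjm : j ≤ m) (hjn : j ≤ n) :
    (a₁ * j + a₂) * (n + 1 - j).choose (m + 1 - j) * (-(b₁ / a₁)) ^ (m + 1 - j)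
      + (b₁ * (j + 1 : ℕ) + b₂ - b₁ + a₂ / a₁ * b₁) * (n - j).choose (m - j)
        * (-(b₁ / a₁)) ^ (m - j)
    = (a₁ * ((m : ℝ) + 1) + a₂) * (n - j).choose (m + 1 - j) * (-(b₁ / a₁)) ^ (m + 1 - j)
      + (b₁ * ((n : ℝ) + 1) - b₁ * ((m : ℝ) + 1) + b₂) * (n - j).choose (m - j)
        * (-(b₁ / a₁)) ^ (m - j) := by
  obtain ⟨K, rfl⟩ := Nat.exists_eq_add_of_le hjm
  obtain ⟨N, rfl⟩ := Nat.exists_eq_add_of_le hjn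
  simp only [show j + N + 1 - j = N + 1 by omega, show j + K + 1 - j = K + 1 by omega,
    Nat.add_sub_cancel_left]
  have hb₁ : a₁ * -(b₁ / a₁) = -b₁ := by field_simp
  have ha₂ : a₂ * -(b₁ / a₁) = -(a₂ / a₁ * b₁) := by ring
  set c := -(b₁ / a₁)
  have hchoose := Nat.cast_sub_mul_choose (R := ℝ) N K
  rw [Nat.choose_succ_succ, pow_succ]
  push_cast
  linear_combination a₁ * c ^ K * c * hchoose + N.choose K * c ^ K * ((j : ℝ) + K - N) * hb₁
    + N.choose K * c ^ K * ha₂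

theorem frobeniusSum_succ_succ (ha₁ : a₁ ≠ 0) {F : ℕ → ℤ → ℝ} {n : ℕ}
    (hFrec : ∀ k : ℤ, F (n + 1) k =
      (a₁ * k + a₂) * F n k + (b₁ * k + b₂ - b₁ + a₂ / a₁ * b₁) * F n (k - 1))
    (hF_neg : F n (-1) = 0) (hF_gt : ∀ j : ℕ, n < j → F n j = 0) (m : ℕ) :
    frobeniusSum F (-(b₁ / a₁)) (n + 1) (m + 1)
      = (a₁ * ((m : ℝ) + 1) + a₂) * frobeniusSum F (-(b₁ / a₁)) n (m + 1)
        + (b₁ * ((n : ℝ) + 1) - b₁ * ((m : ℝ) + 1) + b₂) * frobeniusSum F (-(b₁ / a₁)) n m := by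
  set c := -(b₁ / a₁)
  set α : ℝ := a₁ * ((m : ℝ) + 1) + a₂
  set γ : ℝ := b₁ * ((n : ℝ) + 1) - b₁ * ((m : ℝ) + 1) + b₂
  have hterm : ∀ j ∈ range (m + 1),
      (a₁ * j + a₂) * F n j * ((n + 1 - j).choose (m + 1 - j) : ℝ) * c ^ (m + 1 - j)
        + (b₁ * (j + 1 : ℕ) + b₂ - b₁ + a₂ / a₁ * b₁) * F n j * ((n - j).choose (m - j) : ℝ)
          * c ^ (m - j)
      = α * (F n j * ((n - j).choose (m + 1 - j) : ℝ) * c ^ (m + 1 - j))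
        + γ * (F n j * ((n - j).choose (m - j) : ℝ) * c ^ (m - j)) := by
    intro j hj
    rcases le_or_gt j n with hjn | hjn
    · linear_combination F n j
        * frobenius_coeff_identity (a₂ := a₂) (b₁ := b₁) (b₂ := b₂) ha₁ (mem_range_succ_iff.mp hj) hjn
    -- for `j > n` the coefficient identity fails (truncated subtraction), but `F n j = 0`
    · simp [hF_gt j hjn]
  have hsplit : frobeniusSum F c (n + 1) (m + 1)
      = ∑ i ∈ range (m + 1 + 1), (a₁ * i + a₂) * F n i * ((n + 1 - i).choose (m + 1 - i) : ℝ)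
            * c ^ (m + 1 - i)
        + ∑ i ∈ range (m + 1 + 1), (b₁ * i + b₂ - b₁ + a₂ / a₁ * b₁) * F n (i - 1)
            * ((n + 1 - i).choose (m + 1 - i) : ℝ) * c ^ (m + 1 - i) := by
    rw [frobeniusSum, ← sum_add_distrib]
    refine sum_congr rfl fun i _ => ?_
    rw [hFrec]
    push_cast
    ring
  rw [hsplit, sum_range_succ _ (m + 1), sum_range_succ' _ (m + 1)]
  have hshift (k : ℕ) : ((k + 1 : ℕ) : ℤ) - 1 = k := by omega
  simp only [Nat.add_sub_add_right, Nat.sub_self, Nat.choose_zero_right, pow_zero, Nat.cast_one,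
    mul_one, Nat.cast_zero, zero_sub, hF_neg, mul_zero, zero_mul, add_zero, hshift]
  rw [add_right_comm, ← sum_add_distrib, sum_congr rfl hterm, sum_add_distrib, frobeniusSum,
    frobeniusSum, sum_range_succ _ (m + 1), mul_add, mul_sum, mul_sum]
  simp only [Nat.sub_self, Nat.choose_zero_right, Nat.cast_one, pow_zero, mul_one, α]
  push_cast
  ring

theorem frobeniusSum_zero_right (F : ℕ → ℤ → ℝ) (c : ℝ) (n : ℕ) :
    frobeniusSum F c n 0 = F n 0 := by
  simp [frobeniusSum]

theorem frobeniusSum_zero_succ {F : ℕ → ℤ → ℝ} (hF : ∀ i : ℕ, 0 < i → F 0 i = 0) (c : ℝ)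
    (k : ℕ) : frobeniusSum F c 0 (k + 1) = 0 := by
  refine sum_eq_zero fun i _ => ?_
  rcases Nat.eq_zero_or_pos i with rfl | hi
  · simp
  · simp [hF i hi]

end Frobenius

theorem generalized_frobenius_formula_general
    (a₁ a₂ b₁ b₂ : ℝ) (ha₁ : 0 < a₁)
    (D F : ℕ → ℤ → ℝ)
    (hD0 : D 0 0 = 1)
    (hDb : ∀ (n : ℕ) (k : ℤ), (k < 0 ∨ (n : ℤ) < k) → D n k = 0)
    (hDrec : ∀ (n : ℕ) (k : ℤ),
      D (n + 1) k =
        (a₁ * (k : ℝ) + a₂) * D n k +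
        (b₁ * ((n : ℝ) + 1) - b₁ * (k : ℝ) + b₂) * D n (k - 1))
    (hF0 : F 0 0 = 1)
    (hFb : ∀ (n : ℕ) (k : ℤ), (k < 0 ∨ (n : ℤ) < k) → F n k = 0)
    (hFrec : ∀ (n : ℕ) (k : ℤ),
      F (n + 1) k =
        (a₁ * (k : ℝ) + a₂) * F n k +
        (b₁ * (k : ℝ) + b₂ - b₁ + (a₂ / a₁) * b₁) * F n (k - 1)) :
    ∀ n k : ℕ, D n (k : ℤ) =
      ∑ i ∈ Finset.range (k + 1),
        F n (i : ℤ) * ((n - i).choose (k - i) : ℝ) * (-(b₁ / a₁)) ^ (k - i) := by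
  intro n
  induction n with
  | zero =>
    rintro (_ | k)
    · simp [hD0, hF0]
    · rw [hDb 0 _ (Or.inr (by omega))]
      exact (frobeniusSum_zero_succ (fun i hi => hFb 0 i (Or.inr (by omega))) _ k).symm
  | succ n ih =>
    have hF_neg : F n (-1) = 0 := hFb n (-1) (Or.inl (by norm_num))
    rintro (_ | m)
    · have hD_neg : D n (-1) = 0 := hDb n (-1) (Or.inl (by norm_num))
      have h0 : D n 0 = F n 0 := (ih 0).trans (frobeniusSum_zero_right F _ n)
      change D (n + 1) (0 : ℕ) = frobeniusSum F _ (n + 1) 0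
      simp [frobeniusSum_zero_right, hDrec, hFrec, hD_neg, hF_neg, h0]
    · change D (n + 1) _ = frobeniusSum F _ (n + 1) (m + 1)
      rw [hDrec, show ((m + 1 : ℕ) : ℤ) - 1 = m by omega, ih m, ih (m + 1),
        frobeniusSum_succ_succ ha₁.ne' (hFrec n) hF_neg (fun j hj => hFb n j (Or.inr (by omega)))]
      push_cast
      rfl

theorem generalized_frobenius_formula
    (a₁ a₂ b₁ b₂ : ℝ) (ha₁ : 0 < a₁) (ha₂ : 0 ≤ a₂) (hb₁ : 0 < b₁) (hb₂ : 0 ≤ b₂)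
    (D F : ℕ → ℤ → ℝ)
    (hD0 : D 0 0 = 1)
    (hDb : ∀ (n : ℕ) (k : ℤ), (k < 0 ∨ (n : ℤ) < k) → D n k = 0)
    (hDrec : ∀ (n : ℕ) (k : ℤ),
      D (n + 1) k =
        (a₁ * (k : ℝ) + a₂) * D n k +
        (b₁ * ((n : ℝ) + 1) - b₁ * (k : ℝ) + b₂) * D n (k - 1))
    (hF0 : F 0 0 = 1)
    (hFb : ∀ (n : ℕ) (k : ℤ), (k < 0 ∨ (n : ℤ) < k) → F n k = 0)
    (hFrec : ∀ (n : ℕ) (k : ℤ),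
      F (n + 1) k =
        (a₁ * (k : ℝ) + a₂) * F n k +
        (b₁ * (k : ℝ) + b₂ - b₁ + (a₂ / a₁) * b₁) * F n (k - 1)) :
    ∀ n k : ℕ, D n (k : ℤ) =
      ∑ i ∈ Finset.range (k + 1),
        F n (i : ℤ) * ((n - i).choose (k - i) : ℝ) * (-(b₁ / a₁)) ^ (k - i) :=
  generalized_frobenius_formula_general a₁ a₂ b₁ b₂ ha₁ D F hD0 hDb hDrec hF0 hFb hFrec
end
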